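/- arXiv:0806.3046 — 5 statements merged into one kernel-verified Lean document; each statement's English description precedes it below -/
import Mathlib

section
/- Fix positive integers n and k, and let d = n div k, r = n mod k. Let P be the Dyck path consisting of d blocks of k north steps followed by k east steps, followed by a final block of r north steps and r east steps. Then the number of Dyck paths of length n lying weakly below P equals (C_k)^d · C_r, where C_m is the m-th Catalan number. -/
/-- A Dyck sequence of length `n`: `g 0 = 0` and `g (i+1) ≤ g i + 1`. -/
def IsDyckSeq {n : ℕ} (g : Fin n → ℕ) : Prop :=
  (∀ i : Fin n, (i : ℕ) = 0 → g i = 0) ∧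
  (∀ i j : Fin n, (j : ℕ) = (i : ℕ) + 1 → g j ≤ g i + 1)

/-- The area statistic of a Dyck sequence. -/
def area {n : ℕ} (g : Fin n → ℕ) : ℕ := ∑ i, g i

/-- The dinv statistic: pairs `i < j` with `g i - g j ∈ {0, 1}`. -/
def dinv {n : ℕ} (g : Fin n → ℕ) : ℕ :=
  (Finset.univ.filter (fun p : Fin n × Fin n =>
    p.1 < p.2 ∧ (g p.1 = g p.2 ∨ g p.1 = g p.2 + 1))).card


def DyckPred (m : ℕ) (g : ℕ → ℕ) : Prop :=
  g 0 = 0 ∧ (∀ t, t + 1 < m → g (t + 1) ≤ g t + 1) ∧ ∀ t, m ≤ t → g t = 0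

def DyckT (m : ℕ) : Type := {g : ℕ → ℕ // DyckPred m g}

lemma DyckPred.le_idx {m : ℕ} {g : ℕ → ℕ} (hg : DyckPred m g) : ∀ t, g t ≤ t := by
  intro t
  induction t with
  | zero => exact hg.1.le
  | succ t ih =>
    by_cases h : t + 1 < m
    · have := hg.2.1 t h; omega
    · rw [hg.2.2 _ (by omega)]; omega

/-! ### building blocks for the first-return decomposition -/

def fwdH (i : ℕ) (g : ℕ → ℕ) : ℕ → ℕ := fun t => if t < i then g (t + 1) - 1 else 0

def fwdK (l i : ℕ) (g : ℕ → ℕ) : ℕ → ℕ := fun t => if t < l then g (i + 1 + t) else 0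

def bwdFun (i : ℕ) (h kk : ℕ → ℕ) : ℕ → ℕ := fun t =>
  if t = 0 then 0 else if t ≤ i then h (t - 1) + 1 else kk (t - (i + 1))

lemma fwdH_lt {i : ℕ} {g : ℕ → ℕ} {t : ℕ} (h : t < i) : fwdH i g t = g (t + 1) - 1 :=
  if_pos h

lemma fwdH_ge {i : ℕ} {g : ℕ → ℕ} {t : ℕ} (h : i ≤ t) : fwdH i g t = 0 :=
  if_neg (by omega)

lemma fwdK_lt {l i : ℕ} {g : ℕ → ℕ} {t : ℕ} (h : t < l) : fwdK l i g t = g (i + 1 + t) :=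
  if_pos h

lemma fwdK_ge {l i : ℕ} {g : ℕ → ℕ} {t : ℕ} (h : l ≤ t) : fwdK l i g t = 0 :=
  if_neg (by omega)

lemma bwdFun_zero {i : ℕ} {h kk : ℕ → ℕ} : bwdFun i h kk 0 = 0 := rfl

lemma bwdFun_le {i t : ℕ} {h kk : ℕ → ℕ} (ht : 0 < t) (hti : t ≤ i) :
    bwdFun i h kk t = h (t - 1) + 1 := by
  unfold bwdFun; rw [if_neg (by omega), if_pos hti]

lemma bwdFun_gt {i t : ℕ} {h kk : ℕ → ℕ} (ht : i < t) :
    bwdFun i h kk t = kk (t - (i + 1)) := by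
  unfold bwdFun; rw [if_neg (by omega), if_neg (by omega)]

section Ret
variable (m : ℕ)

lemma exRet (g : DyckT (m + 1)) : ∃ j, 0 < j ∧ g.1 j = 0 :=
  ⟨m + 1, by omega, g.2.2.2 _ le_rfl⟩

/-- index of first return minus one -/
noncomputable def idx (g : DyckT (m + 1)) : ℕ := Nat.find (exRet m g) - 1

lemma idx_le (g : DyckT (m + 1)) : idx m g ≤ m := by
  have h1 : Nat.find (exRet m g) ≤ m + 1 :=
    Nat.find_le ⟨by omega, g.2.2.2 _ le_rfl⟩
  unfold idx; omega

lemma idx_succ_zero (g : DyckT (m + 1)) : g.1 (idx m g + 1) = 0 := by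
  have h1 := Nat.find_spec (exRet m g)
  have h2 : idx m g + 1 = Nat.find (exRet m g) := by
    have := h1.1; unfold idx; omega
  rw [h2]; exact h1.2

lemma idx_ne_zero (g : DyckT (m + 1)) : ∀ t, 0 < t → t ≤ idx m g → g.1 t ≠ 0 := by
  intro t ht hle
  have h1 := Nat.find_spec (exRet m g)
  have h2 := Nat.find_min (exRet m g) (m := t) (by unfold idx at hle; omega)
  tauto

lemma fwdH_dyck (g : DyckT (m + 1)) : DyckPred (idx m g) (fwdH (idx m g) g.1) := by
  refine ⟨?_, ?_, fun t ht => fwdH_ge ht⟩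
  · by_cases h : 0 < idx m g
    · rw [fwdH_lt h]
      have h1 : g.1 1 ≠ 0 := idx_ne_zero m g 1 one_pos h
      have h2 : g.1 (0 + 1) ≤ g.1 0 + 1 := g.2.2.1 0 (by have := idx_le m g; omega)
      have h3 := g.2.1
      simp only [Nat.zero_add] at h2 ⊢
      omega
    · exact fwdH_ge (by omega)
  · intro t ht
    rw [fwdH_lt ht, fwdH_lt (show t < idx m g by omega)]
    have h1 : g.1 (t + 1) ≠ 0 := idx_ne_zero m g (t + 1) (by omega) (by omega)
    have h2 : g.1 (t + 1 + 1) ≤ g.1 (t + 1) + 1 :=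
      g.2.2.1 (t + 1) (by have := idx_le m g; omega)
    omega

lemma fwdK_dyck (g : DyckT (m + 1)) :
    DyckPred (m - idx m g) (fwdK (m - idx m g) (idx m g) g.1) := by
  refine ⟨?_, ?_, fun t ht => fwdK_ge ht⟩
  · by_cases h : 0 < m - idx m g
    · rw [fwdK_lt h]
      simpa using idx_succ_zero m g
    · exact fwdK_ge (by omega)
  · intro t ht
    rw [fwdK_lt ht, fwdK_lt (show t < m - idx m g by omega)]
    have h2 : g.1 (idx m g + 1 + t + 1) ≤ g.1 (idx m g + 1 + t) + 1 :=
      g.2.2.1 (idx m g + 1 + t) (by have := idx_le m g; omega)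
    have e : idx m g + 1 + (t + 1) = idx m g + 1 + t + 1 := by omega
    rw [e]; exact h2

lemma bwdFun_dyck {i : ℕ} (hi : i ≤ m) {h kk : ℕ → ℕ}
    (hh : DyckPred i h) (hkk : DyckPred (m - i) kk) :
    DyckPred (m + 1) (bwdFun i h kk) := by
  refine ⟨bwdFun_zero, ?_, ?_⟩
  · intro t ht
    rcases Nat.eq_zero_or_pos t with rfl | htpos
    · simp only [Nat.zero_add]
      rcases Nat.lt_or_ge 0 i with h0 | h0
      · rw [bwdFun_zero, bwdFun_le one_pos (by omega)]
        have e0 : (1 : ℕ) - 1 = 0 := rfl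
        rw [e0, hh.1]
      · rw [bwdFun_zero, bwdFun_gt (by omega)]
        have e : (1 : ℕ) - (i + 1) = 0 := by omega
        rw [e, hkk.1]
        omega
    · rcases Nat.lt_or_ge t i with hc | hc
      · rw [bwdFun_le (by omega) (by omega), bwdFun_le htpos (by omega)]
        have h1 := hh.2.1 (t - 1) (by omega)
        have e : t - 1 + 1 = t + 1 - 1 := by omega
        rw [e] at h1; omega
      rcases Nat.eq_or_lt_of_le hc with hc2 | hc2
      · rw [bwdFun_gt (by omega)]
        have e : t + 1 - (i + 1) = 0 := by omega
        rw [e, hkk.1]; omega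
      · rw [bwdFun_gt (by omega), bwdFun_gt (by omega)]
        have h1 := hkk.2.1 (t - (i + 1)) (by omega)
        have e : t - (i + 1) + 1 = t + 1 - (i + 1) := by omega
        rw [e] at h1
        exact h1
  · intro t ht
    rw [bwdFun_gt (by omega)]
    exact hkk.2.2 _ (by omega)

noncomputable def fwd (g : DyckT (m + 1)) :
    Σ i : Fin (m + 1), DyckT i.1 × DyckT (m - i.1) :=
  ⟨⟨idx m g, by have := idx_le m g; omega⟩,
   ⟨fwdH (idx m g) g.1, fwdH_dyck m g⟩,
   ⟨fwdK (m - idx m g) (idx m g) g.1, fwdK_dyck m g⟩⟩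

def bwd (x : Σ i : Fin (m + 1), DyckT i.1 × DyckT (m - i.1)) : DyckT (m + 1) :=
  ⟨bwdFun x.1.1 x.2.1.1 x.2.2.1, bwdFun_dyck m (by omega) x.2.1.2 x.2.2.2⟩

lemma sigma_eq {a b : Σ i : Fin (m + 1), DyckT i.1 × DyckT (m - i.1)}
    (h1 : a.1.1 = b.1.1) (h2 : ∀ t, a.2.1.1 t = b.2.1.1 t)
    (h3 : ∀ t, a.2.2.1 t = b.2.2.1 t) : a = b := by
  obtain ⟨⟨a1, ha1⟩, ⟨f, hf⟩, ⟨g, hg⟩⟩ := a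
  obtain ⟨⟨b1, hb1⟩, ⟨f', hf'⟩, ⟨g', hg'⟩⟩ := b
  simp only [Fin.val_mk] at h1
  subst h1
  simp only at h2 h3
  have hff : f = f' := funext h2
  subst hff
  have hgg : g = g' := funext h3
  subst hgg
  rfl

lemma bwd_fwd (g : DyckT (m + 1)) : bwd m (fwd m g) = g := by
  apply Subtype.ext
  funext t
  show bwdFun (idx m g) (fwdH (idx m g) g.1) (fwdK (m - idx m g) (idx m g) g.1) t = g.1 t
  rcases Nat.eq_zero_or_pos t with rfl | htpos
  · rw [bwdFun_zero, g.2.1]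
  rcases le_or_gt t (idx m g) with hc | hc
  · rw [bwdFun_le htpos hc, fwdH_lt (by omega)]
    have h1 : g.1 (t - 1 + 1) ≠ 0 := by
      have e : t - 1 + 1 = t := by omega
      rw [e]; exact idx_ne_zero m g t htpos hc
    have e : t - 1 + 1 = t := by omega
    rw [e] at h1 ⊢
    omega
  · rw [bwdFun_gt hc]
    rcases le_or_gt (m + 1) t with hm | hm
    · rw [fwdK_ge (by omega), g.2.2.2 t hm]
    · rw [fwdK_lt (by omega)]
      have e : idx m g + 1 + (t - (idx m g + 1)) = t := by omega
      rw [e]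

lemma fwd_bwd (x : Σ i : Fin (m + 1), DyckT i.1 × DyckT (m - i.1)) :
    fwd m (bwd m x) = x := by
  obtain ⟨⟨i, hi⟩, ⟨h, hh⟩, ⟨kk, hkk⟩⟩ := x
  have hIdx : idx m (bwd m ⟨⟨i, hi⟩, ⟨h, hh⟩, ⟨kk, hkk⟩⟩) = i := by
    have hfind : Nat.find (exRet m (bwd m ⟨⟨i, hi⟩, ⟨h, hh⟩, ⟨kk, hkk⟩⟩)) = i + 1 := by
      rw [Nat.find_eq_iff]
      constructor
      · refine ⟨by omega, ?_⟩
        show bwdFun i h kk (i + 1) = 0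
        rw [bwdFun_gt (by omega)]
        have e : i + 1 - (i + 1) = 0 := by omega
        rw [e, hkk.1]
      · intro t htlt
        rintro ⟨ht0, htz⟩
        revert htz
        show bwdFun i h kk t ≠ 0
        rw [bwdFun_le ht0 (by omega)]
        omega
    unfold idx
    rw [hfind]
    omega
  refine sigma_eq m ?_ ?_ ?_
  · exact hIdx
  · intro t
    show fwdH (idx m _) (bwdFun i h kk) t = h t
    rw [hIdx]
    rcases Nat.lt_or_ge t i with hc | hc
    · rw [fwdH_lt hc, bwdFun_le (by omega) (by omega)]
      simp
    · rw [fwdH_ge hc, hh.2.2 t hc]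
  · intro t
    show fwdK (m - idx m _) (idx m _) (bwdFun i h kk) t = kk t
    rw [hIdx]
    rcases Nat.lt_or_ge t (m - i) with hc | hc
    · rw [fwdK_lt hc, bwdFun_gt (by omega)]
      congr 1
      omega
    · rw [fwdK_ge hc, hkk.2.2 t hc]

noncomputable def retEquiv : DyckT (m + 1) ≃ Σ i : Fin (m + 1), DyckT i.1 × DyckT (m - i.1) :=
  ⟨fwd m, bwd m, bwd_fwd m, fwd_bwd m⟩

end Ret

instance DyckT.finite (m : ℕ) : Finite (DyckT m) := by
  apply Finite.of_injective (fun g : DyckT m => fun i : Fin m =>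
    (⟨g.1 i, by have h1 := g.2.le_idx i; have := i.2; omega⟩ : Fin (m + 1)))
  intro g h hgh
  apply Subtype.ext
  funext t
  by_cases ht : t < m
  · have := congrFun hgh ⟨t, ht⟩
    simpa using congrArg Fin.val this
  · rw [g.2.2.2 t (by omega), h.2.2.2 t (by omega)]

lemma nat_card_sigma {ι : Type*} [Fintype ι] (f : ι → Type*) [∀ i, Finite (f i)] :
    Nat.card (Σ i, f i) = ∑ i, Nat.card (f i) := by
  letI := fun i => Fintype.ofFinite (f i)
  simp [Nat.card_eq_fintype_card]

def dyckT0Equiv : DyckT 0 ≃ PUnit where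
  toFun _ := Unit.unit
  invFun _ := ⟨fun _ => 0, rfl, fun t ht => absurd ht (by omega), fun t _ => rfl⟩
  left_inv g := Subtype.ext (funext fun t => (g.2.2.2 t (Nat.zero_le t)).symm)
  right_inv _ := rfl

lemma card_DyckT (m : ℕ) : Nat.card (DyckT m) = catalan m := by
  induction m using Nat.strong_induction_on with
  | _ m ih =>
    obtain _ | m := m
    · rw [Nat.card_congr dyckT0Equiv]
      simp [catalan]
    · rw [Nat.card_congr (retEquiv m), nat_card_sigma, catalan_succ]
      refine Finset.sum_congr rfl fun i _ => ?_
      rw [Nat.card_prod, ih i.1 (by omega), ih (m - i.1) (by omega)]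

/-! ### Block decomposition -/

section Blocks
variable (n k : ℕ)

lemma succ_div_mod {i : ℕ} (hk : 0 < k) (hz : (i + 1) % k ≠ 0) :
    (i + 1) / k = i / k ∧ (i + 1) % k = i % k + 1 := by
  have hd : ¬ k ∣ (i + 1) := fun hdvd => hz (Nat.eq_zero_of_dvd_of_lt hdvd |> fun _ => by
    exact (Nat.mod_eq_zero_of_dvd hdvd))
  have hdiv : (i + 1) / k = i / k := Nat.succ_div_of_not_dvd hd
  refine ⟨hdiv, ?_⟩
  have e1 := Nat.div_add_mod i k
  have e2 := Nat.div_add_mod (i + 1) k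
  rw [hdiv] at e2
  have hlt : (i + 1) % k < k := Nat.mod_lt _ hk
  generalize k * (i / k) = p at e1 e2
  omega

def blockFun {n : ℕ} (g : Fin n → ℕ) (len off : ℕ) : ℕ → ℕ := fun t =>
  if h : t < len ∧ off + t < n then g ⟨off + t, h.2⟩ else 0

lemma blockFun_lt {n : ℕ} {g : Fin n → ℕ} {len off t : ℕ} (h1 : t < len)
    (h2 : off + t < n) : blockFun g len off t = g ⟨off + t, h2⟩ := dif_pos ⟨h1, h2⟩

lemma blockFun_ge {n : ℕ} {g : Fin n → ℕ} {len off t : ℕ} (h : len ≤ t) :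
    blockFun g len off t = 0 := dif_neg (fun hc => absurd hc.1 (by omega))

def glueFun (H : ∀ _ : Fin (n / k), ℕ → ℕ) (L : ℕ → ℕ) : Fin n → ℕ :=
  fun i => if h : i.1 / k < n / k then H ⟨i.1 / k, h⟩ (i.1 % k) else L (i.1 % k)

lemma glueFun_lt {H : ∀ _ : Fin (n / k), ℕ → ℕ} {L : ℕ → ℕ} {i : Fin n}
    (h : i.1 / k < n / k) : glueFun n k H L i = H ⟨i.1 / k, h⟩ (i.1 % k) := dif_pos h

lemma glueFun_ge {H : ∀ _ : Fin (n / k), ℕ → ℕ} {L : ℕ → ℕ} {i : Fin n}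
    (h : ¬ i.1 / k < n / k) : glueFun n k H L i = L (i.1 % k) := dif_neg h

lemma off_bound {b t : ℕ} (hb : b < n / k) (ht : t < k) : b * k + t < n := by
  have h1 : b * k + k ≤ (n / k) * k := by
    calc b * k + k = (b + 1) * k := by ring
    _ ≤ (n / k) * k := Nat.mul_le_mul_right k (by omega)
  have h2 : (n / k) * k ≤ n := Nat.div_mul_le_self n k
  omega

lemma last_bound {t : ℕ} (ht : t < n % k) : (n / k) * k + t < n := by
  have := Nat.div_add_mod' n k
  omega

variable {n k}

/-- the `b`-th block of a staircase-dominated Dyck sequence is a Dyck sequence -/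
lemma block_dyck (hk : 0 < k) (G : {g : Fin n → ℕ // IsDyckSeq g ∧ ∀ i : Fin n, g i ≤ (i : ℕ) % k})
    {b : ℕ} (hb : b < n / k) : DyckPred k (blockFun G.1 k (b * k)) := by
  refine ⟨?_, ?_, fun t ht => blockFun_ge ht⟩
  · have hbnd : b * k + 0 < n := off_bound n k hb hk
    rw [blockFun_lt hk hbnd]
    have hle := G.2.2 ⟨b * k + 0, hbnd⟩
    have e : (b * k + 0) % k = 0 := by
      rw [add_comm, Nat.add_mul_mod_self_right]; exact Nat.zero_mod k
    simp only [Fin.val_mk] at hle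
    rw [e] at hle
    omega
  · intro t ht
    have hbnd1 : b * k + (t + 1) < n := off_bound n k hb ht
    have hbnd : b * k + t < n := by omega
    rw [blockFun_lt ht hbnd1, blockFun_lt (by omega) hbnd]
    exact G.2.1.2 ⟨b * k + t, hbnd⟩ ⟨b * k + (t + 1), hbnd1⟩ (by simp [Fin.val_mk]; omega)

/-- the last block of a staircase-dominated Dyck sequence is a Dyck sequence -/
lemma last_dyck (hk : 0 < k) (G : {g : Fin n → ℕ // IsDyckSeq g ∧ ∀ i : Fin n, g i ≤ (i : ℕ) % k}) :
    DyckPred (n % k) (blockFun G.1 (n % k) ((n / k) * k)) := by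
  refine ⟨?_, ?_, fun t ht => blockFun_ge ht⟩
  · by_cases h0 : 0 < n % k
    · have hbnd : (n / k) * k + 0 < n := last_bound n k h0
      rw [blockFun_lt h0 hbnd]
      have hle := G.2.2 ⟨(n / k) * k + 0, hbnd⟩
      have e : ((n / k) * k + 0) % k = 0 := by
        rw [add_comm, Nat.add_mul_mod_self_right]; exact Nat.zero_mod k
      simp only [Fin.val_mk] at hle
      rw [e] at hle
      omega
    · exact blockFun_ge (by omega)
  · intro t ht
    have hbnd1 : (n / k) * k + (t + 1) < n := last_bound n k ht
    have hbnd : (n / k) * k + t < n := by omega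
    rw [blockFun_lt ht hbnd1, blockFun_lt (by omega) hbnd]
    exact G.2.1.2 ⟨_, hbnd⟩ ⟨_, hbnd1⟩ (by simp [Fin.val_mk]; omega)

lemma div_eq_of_not_lt (hk : 0 < k) {i : Fin n} (h : ¬ i.1 / k < n / k) : i.1 / k = n / k :=
  le_antisymm (Nat.div_le_div_right i.2.le) (by omega)

lemma mod_lt_of_last (hk : 0 < k) {i : Fin n} (h : ¬ i.1 / k < n / k) : i.1 % k < n % k := by
  have hd := div_eq_of_not_lt hk h
  have e1 := Nat.div_add_mod i.1 k
  rw [hd] at e1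
  have e2 := Nat.div_add_mod n k
  have := i.2
  generalize k * (n / k) = p at e1 e2
  omega

lemma glue_dyck (hk : 0 < k) (H : Fin (n / k) → DyckT k) (L : DyckT (n % k)) :
    IsDyckSeq (glueFun n k (fun b => (H b).1) L.1) ∧
      ∀ i : Fin n, glueFun n k (fun b => (H b).1) L.1 i ≤ (i : ℕ) % k := by
  refine ⟨⟨?_, ?_⟩, ?_⟩
  · intro i hi
    have h0 : i.1 % k = 0 := by rw [hi]; exact Nat.zero_mod k
    by_cases h : i.1 / k < n / k
    · rw [glueFun_lt n k h, h0]; exact (H _).2.1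
    · rw [glueFun_ge n k h, h0]; exact L.2.1
  · intro i j hj
    by_cases hz : j.1 % k = 0
    · have : glueFun n k (fun b => (H b).1) L.1 j = 0 := by
        by_cases h : j.1 / k < n / k
        · rw [glueFun_lt n k h, hz]; exact (H _).2.1
        · rw [glueFun_ge n k h, hz]; exact L.2.1
      omega
    · rw [hj] at hz
      obtain ⟨hdiv, hmod⟩ := succ_div_mod k hk hz
      rw [← hj] at hdiv hmod
      by_cases h : i.1 / k < n / k
      · have hj' : j.1 / k < n / k := by omega
        rw [glueFun_lt n k hj', glueFun_lt n k h]
        have hfin : (⟨j.1 / k, hj'⟩ : Fin (n / k)) = ⟨i.1 / k, h⟩ := Fin.ext hdiv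
        rw [hfin, hmod]
        have hjk : j.1 % k < k := Nat.mod_lt _ hk
        exact (H _).2.2.1 (i.1 % k) (by omega)
      · have hj' : ¬ j.1 / k < n / k := by omega
        rw [glueFun_ge n k hj', glueFun_ge n k h]
        rw [hmod]
        have := mod_lt_of_last hk hj'
        exact L.2.2.1 (i.1 % k) (by omega)
  · intro i
    by_cases h : i.1 / k < n / k
    · rw [glueFun_lt n k h]; exact (H _).2.le_idx _
    · rw [glueFun_ge n k h]; exact L.2.le_idx _

def blockEquiv (n k : ℕ) (hk : 0 < k) :
    {g : Fin n → ℕ // IsDyckSeq g ∧ ∀ i : Fin n, g i ≤ (i : ℕ) % k} ≃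
      (Fin (n / k) → DyckT k) × DyckT (n % k) where
  toFun G := (fun b => ⟨blockFun G.1 k (b.1 * k), block_dyck hk G b.2⟩,
    ⟨blockFun G.1 (n % k) ((n / k) * k), last_dyck hk G⟩)
  invFun x := ⟨glueFun n k (fun b => (x.1 b).1) x.2.1,
    (glue_dyck hk x.1 x.2).1, (glue_dyck hk x.1 x.2).2⟩
  left_inv G := by
    apply Subtype.ext
    funext i
    show glueFun n k (fun b => blockFun G.1 k (b.1 * k)) (blockFun G.1 (n % k) (n / k * k)) i
      = G.1 i
    by_cases h : i.1 / k < n / k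
    · rw [glueFun_lt n k h]
      have e : i.1 / k * k + i.1 % k = i.1 := Nat.div_add_mod' i.1 k
      rw [blockFun_lt (Nat.mod_lt _ hk) (show i.1 / k * k + i.1 % k < n by rw [e]; exact i.2)]
      exact congrArg G.1 (Fin.ext e)
    · rw [glueFun_ge n k h]
      have hd := div_eq_of_not_lt hk h
      have hm := mod_lt_of_last hk h
      have e : n / k * k + i.1 % k = i.1 := by
        have := Nat.div_add_mod' i.1 k
        rw [hd] at this
        exact this
      rw [blockFun_lt hm (show n / k * k + i.1 % k < n by rw [e]; exact i.2)]
      exact congrArg G.1 (Fin.ext e)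
  right_inv x := by
    obtain ⟨H, L⟩ := x
    have hdivb : ∀ (b : Fin (n / k)) (t : ℕ), t < k → (b.1 * k + t) / k = b.1 := by
      intro b t ht
      rw [add_comm, Nat.add_mul_div_right t b.1 hk, Nat.div_eq_of_lt ht, zero_add]
    have hmodb : ∀ (b t : ℕ), t < k → (b * k + t) % k = t := by
      intro b t ht
      rw [add_comm, Nat.add_mul_mod_self_right, Nat.mod_eq_of_lt ht]
    refine Prod.ext ?_ ?_
    · funext b
      apply Subtype.ext
      funext t
      show blockFun (glueFun n k (fun b => (H b).1) L.1) k (b.1 * k) t = (H b).1 t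
      by_cases ht : t < k
      · have hbnd : b.1 * k + t < n := off_bound n k b.2 ht
        rw [blockFun_lt ht hbnd]
        have hlt : (b.1 * k + t) / k < n / k := by rw [hdivb b t ht]; exact b.2
        rw [glueFun_lt n k (i := ⟨b.1 * k + t, hbnd⟩) hlt]
        have hfin : (⟨(b.1 * k + t) / k, hlt⟩ : Fin (n / k)) = b := Fin.ext (hdivb b t ht)
        rw [hfin]
        exact congrArg (H b).1 (hmodb b.1 t ht)
      · rw [blockFun_ge (by omega)]
        exact ((H b).2.2.2 t (by omega)).symm
    · apply Subtype.ext
      funext t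
      show blockFun (glueFun n k (fun b => (H b).1) L.1) (n % k) ((n / k) * k) t = L.1 t
      by_cases ht : t < n % k
      · have htk : t < k := by have := Nat.mod_lt n hk; omega
        have hbnd : (n / k) * k + t < n := last_bound n k ht
        rw [blockFun_lt ht hbnd]
        have hdl : ((n / k) * k + t) / k = n / k := by
          rw [add_comm, Nat.add_mul_div_right t (n / k) hk, Nat.div_eq_of_lt htk, zero_add]
        rw [glueFun_ge n k (i := ⟨(n / k) * k + t, hbnd⟩) (by rw [hdl]; omega)]
        exact congrArg L.1 (hmodb (n / k) t htk)
      · rw [blockFun_ge (by omega)]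
        exact (L.2.2.2 t (by omega)).symm

end Blocks

/-- The Dyck sequence of the staircase path `P` with `n div k` blocks of `k` north
steps followed by `k` east steps and a final block of `n mod k` north and east
steps is `i ↦ i % k`.  The number of Dyck paths of length `n` lying weakly below
`P` (entrywise comparison of Dyck sequences) is `(C_k)^(n div k) * C_(n mod k)`. -/
theorem card_dyck_below_staircase (n k : ℕ) (hn : 0 < n) (hk : 0 < k) :
    {g : Fin n → ℕ | IsDyckSeq g ∧ ∀ i : Fin n, g i ≤ (i : ℕ) % k}.ncard =
      catalan k ^ (n / k) * catalan (n % k) := by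
  have h1 : {g : Fin n → ℕ | IsDyckSeq g ∧ ∀ i : Fin n, g i ≤ (i : ℕ) % k}.ncard
      = Nat.card {g : Fin n → ℕ // IsDyckSeq g ∧ ∀ i : Fin n, g i ≤ (i : ℕ) % k} := by
    rw [← Nat.card_coe_set_eq]
    rfl
  rw [h1, Nat.card_congr (blockEquiv n k hk), Nat.card_prod, Nat.card_fun,
    card_DyckT, card_DyckT, Nat.card_eq_fintype_card, Fintype.card_fin]
end

section
/- For n ≥ 1, the generating polynomial Σ_g q^{area(g)} over Dyck sequences g of length n satisfies the Carlitz recurrence: C_n(q) = Σ_{j=0}^{n-1} q^j C_j(q) C_{n-1-j}(q), with C_0(q) = 1. -/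
/-- The Carlitz `q`-Catalan polynomial: generating polynomial of `area` over
Dyck sequences of length `n`. -/
noncomputable def carlitzCatalan (n : ℕ) : Polynomial ℤ :=
  ∑ᶠ g ∈ {g : Fin n → ℕ | IsDyckSeq g}, Polynomial.X ^ area g

/-!
Cut a Dyck sequence of length `n` at its last zero, at position `k`. What precedes it is a Dyck
sequence `b` of length `k`; what follows is `a + 1` for a Dyck sequence `a` of length
`j = n - 1 - k`, since all its entries are positive and the first is at most `1`. Conversely
`b ++ (0, a + 1)` is a Dyck sequence whose last zero is at `k`, and its area is
`area b + area a + j`. Summing over the position of the last zero gives the recurrence.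
-/

open Finset Polynomial

lemma IsDyckSeq.le_val {n : ℕ} {g : Fin n → ℕ} (hg : IsDyckSeq g) (i : Fin n) : g i ≤ i := by
  obtain ⟨i, hi⟩ := i
  induction i with
  | zero => exact (hg.1 _ rfl).le
  | succ i ih => exact (hg.2 ⟨i, by omega⟩ _ rfl).trans (Nat.add_le_add_right (ih _) 1)

lemma finite_setOf_isDyckSeq (n : ℕ) : {g : Fin n → ℕ | IsDyckSeq g}.Finite :=
  (Set.finite_Iic fun i : Fin n => (i : ℕ)).subset fun _ hg => hg.le_val

noncomputable def dyckSeqs (n : ℕ) : Finset (Fin n → ℕ) := (finite_setOf_isDyckSeq n).toFinset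

@[simp]
lemma mem_dyckSeqs {n : ℕ} {g : Fin n → ℕ} : g ∈ dyckSeqs n ↔ IsDyckSeq g :=
  Set.Finite.mem_toFinset _

lemma carlitzCatalan_eq_sum (n : ℕ) : carlitzCatalan n = ∑ g ∈ dyckSeqs n, X ^ area g :=
  finsum_mem_eq_finite_toFinset_sum _ _

lemma carlitzCatalan_zero : carlitzCatalan 0 = 1 := by
  have : dyckSeqs 0 = {Fin.elim0} := by
    ext g
    simp [IsDyckSeq, Subsingleton.elim g Fin.elim0]
  simp [carlitzCatalan_eq_sum, this, area]

lemma isDyckSeq_append_iff {m l : ℕ} {u : Fin m → ℕ} {v : Fin l → ℕ}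
    (hv : ∀ i : Fin l, (i : ℕ) = 0 → v i = 0) :
    IsDyckSeq (Fin.append u v) ↔ IsDyckSeq u ∧ IsDyckSeq v := by
  constructor
  · intro hg
    refine ⟨⟨fun i hi => ?_, fun i k hik => ?_⟩, ⟨hv, fun i k hik => ?_⟩⟩
    · simpa using hg.1 (Fin.castAdd l i) (by simpa using hi)
    · simpa using hg.2 (Fin.castAdd l i) (Fin.castAdd l k) (by simpa using hik)
    · simpa using hg.2 (Fin.natAdd m i) (Fin.natAdd m k) (by simp [hik]; omega)
  · rintro ⟨hu, hv⟩
    refine ⟨fun i hi => ?_, fun i k hik => ?_⟩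
    · induction i using Fin.addCases with
      | left i => simpa using hu.1 i (by simpa using hi)
      | right i => simpa using hv.1 i (by simp at hi; omega)
    · induction k using Fin.addCases with
      | left k =>
        induction i using Fin.addCases with
        | left i => simpa using hu.2 i k (by simpa using hik)
        | right i => simp at hik; omega
      | right k =>
        induction i using Fin.addCases with
        | left i => simp [hv.1 k (by simp at hik; omega)]
        | right i => simpa using hv.2 i k (by simp at hik; omega)

namespace DyckSeq

def raise {j : ℕ} (a : Fin j → ℕ) : Fin (j + 1) → ℕ := Fin.cons 0 fun i => a i + 1

lemma raise_eq_zero_of_val_eq_zero {j : ℕ} (a : Fin j → ℕ) (i : Fin (j + 1))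
    (hi : (i : ℕ) = 0) : raise a i = 0 := by
  obtain rfl : i = 0 := Fin.ext hi
  rfl

lemma isDyckSeq_raise_iff {j : ℕ} {a : Fin j → ℕ} : IsDyckSeq (raise a) ↔ IsDyckSeq a := by
  constructor
  · intro h
    refine ⟨fun i hi => ?_, fun i k hik => ?_⟩
    · simpa [raise] using h.2 0 i.succ (by simp [hi])
    · simpa [raise] using h.2 i.succ k.succ (by simp [hik])
  · intro h
    refine ⟨raise_eq_zero_of_val_eq_zero a, fun i k hik => ?_⟩
    induction k using Fin.cases with
    | zero => simp at hik
    | succ k =>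
      induction i using Fin.cases with
      | zero => simp [raise, h.1 k (by simpa using hik)]
      | succ i => simpa [raise] using h.2 i k (by simpa using hik)

lemma area_append {m l : ℕ} (u : Fin m → ℕ) (v : Fin l → ℕ) :
    area (Fin.append u v) = area u + area v := by
  simp [area, Fin.sum_univ_add]

lemma area_raise {j : ℕ} (a : Fin j → ℕ) : area (raise a) = area a + j := by
  simp [area, raise, Fin.sum_univ_succ, sum_add_distrib]

/-- Junk value `0` when `g` has no zero. -/
def lastZero {n : ℕ} (g : Fin n → ℕ) : ℕ := (univ.filter fun i => g i = 0).sup Fin.val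

lemma lastZero_lt {n : ℕ} (g : Fin n → ℕ) (hn : 0 < n) : lastZero g < n :=
  (Finset.sup_lt_iff hn).2 fun i _ => i.isLt

lemma le_lastZero {n : ℕ} {g : Fin n → ℕ} {i : Fin n} (hi : g i = 0) : (i : ℕ) ≤ lastZero g :=
  le_sup (f := Fin.val) (by simpa using hi)

lemma lastZero_eq_iff {n : ℕ} {g : Fin n → ℕ} (hg : ∃ i, g i = 0) (k : Fin n) :
    lastZero g = k ↔ g k = 0 ∧ ∀ i, k < i → g i ≠ 0 := by
  constructor
  · intro hk
    obtain ⟨i₀, hi₀, hsup⟩ := exists_mem_eq_sup (univ.filter fun i => g i = 0)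
      (by simpa [Finset.Nonempty] using hg) Fin.val
    rw [lastZero, hsup] at hk
    obtain rfl := Fin.ext hk
    refine ⟨by simpa using hi₀, fun i hi hgi => absurd (le_lastZero hgi) ?_⟩
    rw [lastZero, hsup]
    exact not_le.2 hi
  · rintro ⟨hk, hpos⟩
    refine le_antisymm (Finset.sup_le fun i hi => ?_) (le_lastZero hk)
    by_contra hlt
    exact hpos i (not_le.1 hlt) (by simpa using hi)

section Glue

variable {k j : ℕ}

def glue (p : (Fin k → ℕ) × (Fin j → ℕ)) : Fin (k + (j + 1)) → ℕ :=
  Fin.append p.1 (raise p.2)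

def unglue (g : Fin (k + (j + 1)) → ℕ) : (Fin k → ℕ) × (Fin j → ℕ) :=
  (fun i => g (Fin.castAdd _ i), fun i => g (Fin.natAdd k i.succ) - 1)

lemma unglue_glue (p : (Fin k → ℕ) × (Fin j → ℕ)) : unglue (glue p) = p := by
  ext i <;> simp [glue, unglue, raise]

lemma lastZero_glue (p : (Fin k → ℕ) × (Fin j → ℕ)) : lastZero (glue p) = k := by
  have h0 : glue p (Fin.natAdd k 0) = 0 := by simp [glue, raise]
  refine (lastZero_eq_iff ⟨_, h0⟩ (Fin.natAdd k 0)).2 ⟨h0, fun i hi => ?_⟩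
  induction i using Fin.addCases with
  | left i => exact absurd hi (by simp [Fin.lt_def, i.isLt.le])
  | right i =>
    induction i using Fin.cases with
    | zero => simp at hi
    | succ i => simp [glue, raise]

lemma glue_unglue {g : Fin (k + (j + 1)) → ℕ} (hg : ∃ i, g i = 0) (h : lastZero g = k) :
    glue (unglue g) = g := by
  obtain ⟨hk, hpos⟩ := (lastZero_eq_iff hg (Fin.natAdd k 0)).1 (by simpa using h)
  refine funext fun i => ?_
  induction i using Fin.addCases with
  | left i => simp [glue, unglue]
  | right i =>
    induction i using Fin.cases with
    | zero => simpa [glue, raise] using hk.symm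
    | succ i =>
      have := hpos (Fin.natAdd k i.succ) (by simp [Fin.lt_def])
      simp only [glue, unglue, raise, Fin.append_right, Fin.cons_succ]
      omega

lemma isDyckSeq_glue_iff {p : (Fin k → ℕ) × (Fin j → ℕ)} :
    IsDyckSeq (glue p) ↔ IsDyckSeq p.1 ∧ IsDyckSeq p.2 := by
  rw [glue, isDyckSeq_append_iff (raise_eq_zero_of_val_eq_zero _), isDyckSeq_raise_iff]

lemma area_glue (p : (Fin k → ℕ) × (Fin j → ℕ)) : area (glue p) = j + area p.1 + area p.2 := by
  rw [glue, area_append, area_raise]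
  ring

end Glue

lemma sum_filter_lastZero_eq (k j : ℕ) :
    ∑ g ∈ dyckSeqs (k + (j + 1)) with lastZero g = k, X ^ area g =
      X ^ j * carlitzCatalan k * carlitzCatalan j := by
  calc _ = ∑ p ∈ dyckSeqs k ×ˢ dyckSeqs j, X ^ area (glue p) := by
        refine (sum_nbij' glue unglue (fun p hp => ?_) (fun g hg => ?_)
          (fun p _ => unglue_glue p) (fun g hg => ?_) (fun p _ => rfl)).symm
        · simpa [isDyckSeq_glue_iff, lastZero_glue] using hp
        · simp only [mem_filter, mem_dyckSeqs] at hg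
          have hglue := hg.1
          rw [← glue_unglue ⟨0, hg.1.1 0 rfl⟩ hg.2, isDyckSeq_glue_iff] at hglue
          simpa using hglue
        · simp only [mem_filter, mem_dyckSeqs] at hg
          exact glue_unglue ⟨0, hg.1.1 0 rfl⟩ hg.2
    _ = _ := by
      rw [carlitzCatalan_eq_sum, carlitzCatalan_eq_sum, mul_assoc, sum_mul_sum, mul_sum,
        sum_product]
      simp_rw [area_glue, pow_add, mul_sum, mul_assoc]

end DyckSeq

open DyckSeq

/-- The Carlitz recurrence:
`C_n(q) = Σ_{j=0}^{n-1} q^j C_j(q) C_{n-1-j}(q)` with `C_0(q) = 1`. -/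
theorem carlitz_recurrence :
    carlitzCatalan 0 = 1 ∧
    ∀ n : ℕ, 1 ≤ n →
      carlitzCatalan n =
        ∑ j ∈ Finset.range n,
          Polynomial.X ^ j * carlitzCatalan j * carlitzCatalan (n - 1 - j) := by
  refine ⟨carlitzCatalan_zero, fun n hn => ?_⟩
  calc carlitzCatalan n = ∑ k ∈ range n, ∑ g ∈ dyckSeqs n with lastZero g = k, X ^ area g := by
        rw [carlitzCatalan_eq_sum,
          sum_fiberwise_of_maps_to fun g _ => mem_range.2 (lastZero_lt g hn)]
    _ = ∑ k ∈ range n, X ^ (n - 1 - k) * carlitzCatalan k * carlitzCatalan (n - 1 - k) := by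
        refine sum_congr rfl fun k hk => ?_
        obtain ⟨j, rfl⟩ : ∃ j, n = k + (j + 1) := ⟨n - 1 - k, by grind⟩
        rw [sum_filter_lastZero_eq, show k + (j + 1) - 1 - k = j by omega]
    _ = _ := by
        rw [← sum_range_reflect]
        refine sum_congr rfl fun k hk => ?_
        rw [show n - 1 - (n - 1 - k) = k by grind]
        ring
end

section
/- For n ≥ 3, the number of Dyck paths of length n that pass through (1,1) but avoid (3,2) equals C_{n-1} − 2·C_{n-2}. -/
/-- Number of north steps among the first `m` steps of `p`. -/
def northCount {n : ℕ} (p : Fin (2 * n) → Bool) (m : ℕ) : ℕ :=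
  (Finset.univ.filter (fun i : Fin (2 * n) => (i : ℕ) < m ∧ p i = true)).card

/-- Number of east steps among the first `m` steps of `p`. -/
def eastCount {n : ℕ} (p : Fin (2 * n) → Bool) (m : ℕ) : ℕ :=
  (Finset.univ.filter (fun i : Fin (2 * n) => (i : ℕ) < m ∧ p i = false)).card

/-- A Dyck path of length `n`, encoded as a sequence of `2n` steps
(`true` = north, `false` = east), ending at `(n,n)` and never going below the
diagonal. -/
def IsDyckPath {n : ℕ} (p : Fin (2 * n) → Bool) : Prop :=
  northCount p (2 * n) = n ∧ ∀ m : ℕ, eastCount p m ≤ northCount p m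

/-- The path `p` passes through the lattice point reached after `a` north steps
and `b` east steps. -/
def PassesThrough {n : ℕ} (p : Fin (2 * n) → Bool) (a b : ℕ) : Prop :=
  ∃ m : ℕ, m ≤ 2 * n ∧ northCount p m = a ∧ eastCount p m = b

def bcount {n : ℕ} (p : Fin (2 * n) → Bool) (b : Bool) (m : ℕ) : ℕ :=
  (Finset.univ.filter (fun i : Fin (2 * n) => (i : ℕ) < m ∧ p i = b)).card

lemma northCount_eq {n : ℕ} (p : Fin (2 * n) → Bool) (m : ℕ) :
    northCount p m = bcount p true m := rfl

lemma eastCount_eq {n : ℕ} (p : Fin (2 * n) → Bool) (m : ℕ) :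
    eastCount p m = bcount p false m := rfl

lemma bcount_zero {n : ℕ} (p : Fin (2 * n) → Bool) (b : Bool) : bcount p b 0 = 0 := by
  simp [bcount]

lemma bcount_succ {n : ℕ} (p : Fin (2 * n) → Bool) (b : Bool) (m : ℕ) :
    bcount p b (m + 1) =
      bcount p b m + if h : m < 2 * n then (if p ⟨m, h⟩ = b then 1 else 0) else 0 := by
  unfold bcount
  by_cases h : m < 2 * n
  · rw [dif_pos h]
    by_cases hp : p ⟨m, h⟩ = b
    · rw [if_pos hp]
      have : (Finset.univ.filter (fun i : Fin (2 * n) => (i : ℕ) < m + 1 ∧ p i = b)) =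
          insert ⟨m, h⟩ (Finset.univ.filter (fun i : Fin (2 * n) => (i : ℕ) < m ∧ p i = b)) := by
        ext i
        simp only [Finset.mem_filter, Finset.mem_univ, true_and, Finset.mem_insert]
        constructor
        · rintro ⟨h1, h2⟩
          rcases Nat.lt_succ_iff_lt_or_eq.mp h1 with h1 | h1
          · exact Or.inr ⟨h1, h2⟩
          · exact Or.inl (Fin.ext h1)
        · rintro (rfl | ⟨h1, h2⟩)
          · exact ⟨Nat.lt_succ_self m, hp⟩
          · exact ⟨Nat.lt_succ_of_lt h1, h2⟩

      rw [this, Finset.card_insert_of_notMem (by simp)]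
    · rw [if_neg hp]
      have : (Finset.univ.filter (fun i : Fin (2 * n) => (i : ℕ) < m + 1 ∧ p i = b)) =
          (Finset.univ.filter (fun i : Fin (2 * n) => (i : ℕ) < m ∧ p i = b)) := by
        ext i
        simp only [Finset.mem_filter, Finset.mem_univ, true_and]
        constructor
        · rintro ⟨h1, h2⟩
          rcases Nat.lt_succ_iff_lt_or_eq.mp h1 with h1 | h1
          · exact ⟨h1, h2⟩
          · exact absurd (by rw [show (⟨m, h⟩ : Fin (2*n)) = i from (Fin.ext h1).symm]; exact h2) hp
        · rintro ⟨h1, h2⟩; exact ⟨Nat.lt_succ_of_lt h1, h2⟩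
      rw [this]; omega
  · rw [dif_neg h]
    have : (Finset.univ.filter (fun i : Fin (2 * n) => (i : ℕ) < m + 1 ∧ p i = b)) =
        (Finset.univ.filter (fun i : Fin (2 * n) => (i : ℕ) < m ∧ p i = b)) := by
      ext i
      have := i.isLt
      simp only [Finset.mem_filter, Finset.mem_univ, true_and]
      constructor
      · rintro ⟨h1, h2⟩; exact ⟨by omega, h2⟩
      · rintro ⟨h1, h2⟩; exact ⟨by omega, h2⟩
    rw [this]; omega

lemma bcount_add_bcount {n : ℕ} (p : Fin (2 * n) → Bool) (m : ℕ) :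
    bcount p true m + bcount p false m = min m (2 * n) := by
  induction m with
  | zero => simp [bcount_zero]
  | succ m ih =>
    rw [bcount_succ, bcount_succ]
    by_cases h : m < 2 * n
    · rw [dif_pos h, dif_pos h]
      cases hp : p ⟨m, h⟩ <;> simp [hp] <;> omega
    · rw [dif_neg h, dif_neg h]; omega

lemma bcount_stable {n : ℕ} (p : Fin (2 * n) → Bool) (b : Bool) {m : ℕ} (h : 2 * n ≤ m) :
    bcount p b m = bcount p b (2 * n) := by
  induction m with
  | zero =>
    have : 2 * n = 0 := by omega
    rw [this]
  | succ m ih =>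
    rcases Nat.lt_or_ge m (2 * n) with h' | h'
    · have : m + 1 = 2 * n := by omega
      rw [this]
    · rw [bcount_succ, dif_neg (by omega), ih h', add_zero]

lemma bcount_mono {n : ℕ} (p : Fin (2 * n) → Bool) (b : Bool) {m m' : ℕ} (h : m ≤ m') :
    bcount p b m ≤ bcount p b m' := by
  induction m' with
  | zero =>
    have : m = 0 := by omega
    rw [this]
  | succ m' ih =>
    rcases Nat.lt_or_ge m (m' + 1) with h' | h'
    · calc bcount p b m ≤ bcount p b m' := ih (by omega)
        _ ≤ _ := by rw [bcount_succ]; omega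
    · have : m = m' + 1 := by omega
      subst this; rfl

open DyckStep

/-- encode a Bool step as a DyckStep -/
def stepOf (b : Bool) : DyckStep := bif b then U else D

lemma stepOf_inj (b c : Bool) : stepOf b = stepOf c ↔ b = c := by
  cases b <;> cases c <;> simp [stepOf]

lemma bcount_eq_count {n : ℕ} (p : Fin (2 * n) → Bool) (b : Bool) (m : ℕ) :
    bcount p b m = (((List.ofFn p).map stepOf).take m).count (stepOf b) := by
  induction m with
  | zero => simp [bcount_zero]
  | succ m ih =>
    rw [bcount_succ, ih, List.take_succ, List.count_append]
    by_cases h : m < 2 * n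
    · rw [dif_pos h]
      have : ((List.ofFn p).map stepOf)[m]? = some (stepOf (p ⟨m, h⟩)) := by
        rw [List.getElem?_eq_getElem (by simpa using h)]
        simp
      rw [this]
      simp only [Option.toList_some, List.count_singleton']
      cases hp : p ⟨m, h⟩ <;> cases b <;> simp [stepOf]
    · rw [dif_neg h, List.getElem?_eq_none (by simpa using h)]
      simp

def IsDyckPath' {n : ℕ} (p : Fin (2 * n) → Bool) : Prop :=
  bcount p true (2 * n) = n ∧ ∀ m : ℕ, bcount p false m ≤ bcount p true m

/-- the DyckWord corresponding to a path -/
def pathToWord {n : ℕ} (p : Fin (2 * n) → Bool) (hp : IsDyckPath' p) : DyckWord where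
  toList := (List.ofFn p).map stepOf
  count_U_eq_count_D := by
    have h1 := bcount_eq_count p true (2 * n)
    have h2 := bcount_eq_count p false (2 * n)
    have hl : ((List.ofFn p).map stepOf).length = 2 * n := by simp
    rw [List.take_of_length_le (le_of_eq hl)] at h1 h2
    have := bcount_add_bcount p (2 * n)
    show ((List.ofFn p).map stepOf).count U = ((List.ofFn p).map stepOf).count D
    rw [show U = stepOf true from rfl, show D = stepOf false from rfl, ← h1, ← h2]
    have := hp.1
    omega
  count_D_le_count_U := fun i => by
    have h1 := bcount_eq_count p true i
    have h2 := bcount_eq_count p false i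
    show _ ≤ (((List.ofFn p).map stepOf).take i).count U
    rw [show U = stepOf true from rfl, show D = stepOf false from rfl, ← h1, ← h2]
    exact hp.2 i

lemma pathToWord_semilength {n : ℕ} (p : Fin (2 * n) → Bool) (hp : IsDyckPath' p) :
    (pathToWord p hp).semilength = n := by
  show ((List.ofFn p).map stepOf).count U = n
  have h1 := bcount_eq_count p true (2 * n)
  rw [List.take_of_length_le (le_of_eq (by simp))] at h1
  rw [show U = stepOf true from rfl, ← h1, hp.1]

/-- the path corresponding to a DyckWord of semilength n -/
def wordToPath {n : ℕ} (w : DyckWord) (hw : w.semilength = n) : Fin (2 * n) → Bool :=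
  fun i => decide (w.toList[(i : ℕ)]'(by rw [← DyckWord.two_mul_semilength_eq_length, hw]; exact i.isLt) = U)

lemma wordToPath_list {n : ℕ} (w : DyckWord) (hw : w.semilength = n) :
    (List.ofFn (wordToPath w hw)).map stepOf = w.toList := by
  have hl : w.toList.length = 2 * n := by rw [← DyckWord.two_mul_semilength_eq_length, hw]
  apply List.ext_getElem (by simp [hl])
  intro i h1 h2
  simp only [List.getElem_map, List.getElem_ofFn]
  rcases (w.toList[i]'h2).dichotomy with h | h <;> simp [wordToPath, h, stepOf]

lemma wordToPath_isDyck {n : ℕ} (w : DyckWord) (hw : w.semilength = n) :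
    IsDyckPath' (wordToPath w hw) := by
  constructor
  · rw [bcount_eq_count, wordToPath_list,
      List.take_of_length_le (le_of_eq (by rw [← DyckWord.two_mul_semilength_eq_length, hw]))]
    exact hw
  · intro m
    rw [bcount_eq_count, bcount_eq_count, wordToPath_list]
    exact w.count_D_le_count_U m

def dyckEquiv (n : ℕ) : {p : Fin (2 * n) → Bool // IsDyckPath' p} ≃ {w : DyckWord // w.semilength = n} where
  toFun := fun ⟨p, hp⟩ => ⟨pathToWord p hp, pathToWord_semilength p hp⟩
  invFun := fun ⟨w, hw⟩ => ⟨wordToPath w hw, wordToPath_isDyck w hw⟩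
  left_inv := fun ⟨p, hp⟩ => by
    ext i
    show decide ((((List.ofFn p).map stepOf))[(i:ℕ)]'_ = U) = p i
    cases h : p i <;> simp [stepOf, h]
  right_inv := fun ⟨w, hw⟩ => by
    apply Subtype.ext
    apply DyckWord.ext
    exact wordToPath_list w hw

lemma ncard_dyck' (n : ℕ) : {p : Fin (2 * n) → Bool | IsDyckPath' p}.ncard = catalan n := by
  rw [← Nat.card_coe_set_eq]
  have e : ↑{p : Fin (2 * n) → Bool | IsDyckPath' p} ≃ {w : DyckWord // w.semilength = n} :=
    dyckEquiv n
  rw [Nat.card_congr e, Nat.card_eq_fintype_card]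
  exact DyckWord.card_dyckWord_semilength_eq_catalan n

lemma bcount_succ' {n : ℕ} (p : Fin (2 * n) → Bool) (b : Bool) (m : ℕ) (h : m < 2 * n) :
    bcount p b (m + 1) = bcount p b m + if p ⟨m, h⟩ = b then 1 else 0 := by
  rw [bcount_succ, dif_pos h]

lemma bcount_shift {n m : ℕ} (p : Fin (2 * n) → Bool) (q : Fin (2 * m) → Bool) (b : Bool)
    (c d : ℕ)
    (hq : ∀ j (h1 : d + j < 2 * m) (h2 : c + j < 2 * n), q ⟨d + j, h1⟩ = p ⟨c + j, h2⟩) :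
    ∀ k, d + k ≤ 2 * m → c + k ≤ 2 * n →
      bcount q b (d + k) + bcount p b c = bcount p b (c + k) + bcount q b d := by
  intro k
  induction k with
  | zero => intro _ _; simp only [Nat.add_zero]; omega
  | succ k ih =>
    intro h1 h2
    have hd : d + k < 2 * m := by omega
    have hc : c + k < 2 * n := by omega
    have e1 : d + (k + 1) = (d + k) + 1 := by omega
    have e2 : c + (k + 1) = (c + k) + 1 := by omega
    rw [e1, e2, bcount_succ' q b _ hd, bcount_succ' p b _ hc, hq k hd hc]
    have := ih (by omega) (by omega)
    omega

lemma bcount_one {n : ℕ} (p : Fin (2 * n) → Bool) (b : Bool) (h : 0 < 2 * n) :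
    bcount p b 1 = if p ⟨0, h⟩ = b then 1 else 0 := by
  rw [show (1 : ℕ) = 0 + 1 from rfl, bcount_succ' p b 0 h, bcount_zero, Nat.zero_add]

lemma dyck_first {m : ℕ} (q : Fin (2 * (m + 1)) → Bool) (hq : IsDyckPath' q) :
    q ⟨0, by omega⟩ = true := by
  have h : (0 : ℕ) < 2 * (m + 1) := by omega
  have h1 := hq.2 1
  have h2 := bcount_add_bcount q 1
  rw [bcount_one q true h, bcount_one q false h] at *
  cases hh : q ⟨0, h⟩
  · rw [hh] at h1; simp at h1
  · rfl

lemma pass11_iff {k : ℕ} (p : Fin (2 * (k + 1)) → Bool) (hd : IsDyckPath' p) :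
    PassesThrough p 1 1 ↔ p ⟨0, by omega⟩ = true ∧ p ⟨1, by omega⟩ = false := by
  have h0 : (0 : ℕ) < 2 * (k + 1) := by omega
  have h1 : (1 : ℕ) < 2 * (k + 1) := by omega
  have e1t := bcount_succ' p true 0 h0
  have e2t := bcount_succ' p true 1 h1
  have e1f := bcount_succ' p false 0 h0
  have e2f := bcount_succ' p false 1 h1
  have ezt := bcount_zero p true
  have ezf := bcount_zero p false
  constructor
  · rintro ⟨m, hm, hN, hE⟩
    rw [northCount_eq] at hN
    rw [eastCount_eq] at hE
    have hadd := bcount_add_bcount p m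
    have hm2 : m = 2 := by omega
    subst hm2
    have hd1 := hd.2 1
    have ha1 := bcount_add_bcount p 1
    have hnc1 : bcount p true 1 = 1 := by omega
    have hp0 : p ⟨0, h0⟩ = true := by
      cases hh : p ⟨0, h0⟩
      · rw [hh] at e1t; simp at e1t; omega
      · rfl
    have hp1 : p ⟨1, h1⟩ = false := by
      cases hh : p ⟨1, h1⟩
      · rfl
      · rw [hh] at e2t; simp at e2t; omega
    exact ⟨hp0, hp1⟩
  · rintro ⟨hp0, hp1⟩
    refine ⟨2, by omega, ?_, ?_⟩
    · rw [northCount_eq]; simp only [hp0, hp1] at e1t e2t; simp at e1t e2t; omega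
    · rw [eastCount_eq]; simp only [hp0, hp1] at e1f e2f; simp at e1f e2f; omega

def shiftTwo {k : ℕ} (p : Fin (2 * (k + 1)) → Bool) : Fin (2 * k) → Bool :=
  fun i => p ⟨2 + i, by omega⟩

def consNE {k : ℕ} (q : Fin (2 * k) → Bool) : Fin (2 * (k + 1)) → Bool :=
  fun i => if h : (i : ℕ) < 2 then decide ((i : ℕ) = 0) else q ⟨(i : ℕ) - 2, by omega⟩

lemma shiftTwo_count {k : ℕ} (p : Fin (2 * (k + 1)) → Bool) (b : Bool) (j : ℕ) (hj : j ≤ 2 * k) :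
    bcount (shiftTwo p) b j + bcount p b 2 = bcount p b (2 + j) := by
  have hs : ∀ j (h1 : 0 + j < 2 * k) (h2 : 2 + j < 2 * (k + 1)),
      shiftTwo p ⟨0 + j, h1⟩ = p ⟨2 + j, h2⟩ := by
    intro j h1 h2
    show p ⟨2 + ((⟨0 + j, h1⟩ : Fin (2 * k)) : ℕ), _⟩ = p ⟨2 + j, h2⟩
    exact congrArg p (Fin.ext (by show 2 + (0 + j) = 2 + j; omega))
  have := bcount_shift p (shiftTwo p) b 2 0 hs j (by omega) (by omega)
  rw [Nat.zero_add] at this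
  rw [this, bcount_zero, Nat.add_zero]

lemma consNE_count {k : ℕ} (q : Fin (2 * k) → Bool) (b : Bool) (j : ℕ) (hj : j ≤ 2 * k) :
    bcount q b j + bcount (consNE q) b 2 = bcount (consNE q) b (2 + j) := by
  have hs : ∀ j (h1 : 0 + j < 2 * k) (h2 : 2 + j < 2 * (k + 1)),
      q ⟨0 + j, h1⟩ = consNE q ⟨2 + j, h2⟩ := by
    intro j h1 h2
    show q ⟨0 + j, h1⟩ = if h : ((⟨2 + j, h2⟩ : Fin (2 * (k + 1))) : ℕ) < 2 then _ else _
    rw [dif_neg (by show ¬ (2 + j < 2); omega)]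
    exact congrArg q (Fin.ext (by show 0 + j = 2 + j - 2; omega))
  have := bcount_shift (consNE q) q b 2 0 hs j (by omega) (by omega)
  rw [Nat.zero_add] at this
  rw [this, bcount_zero, Nat.add_zero]

lemma consNE_zero {k : ℕ} (q : Fin (2 * k) → Bool) (h : (0:ℕ) < 2 * (k+1)) :
    consNE q ⟨0, h⟩ = true := by simp [consNE]

lemma consNE_one {k : ℕ} (q : Fin (2 * k) → Bool) (h : (1:ℕ) < 2 * (k+1)) :
    consNE q ⟨1, h⟩ = false := by simp [consNE]

lemma shiftTwo_isDyck {k : ℕ} (p : Fin (2 * (k + 1)) → Bool) (hd : IsDyckPath' p)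
    (hp0 : p ⟨0, by omega⟩ = true) (hp1 : p ⟨1, by omega⟩ = false) :
    IsDyckPath' (shiftTwo p) := by
  have h0 : (0 : ℕ) < 2 * (k + 1) := by omega
  have h1 : (1 : ℕ) < 2 * (k + 1) := by omega
  have e1t := bcount_succ' p true 0 h0
  have e2t := bcount_succ' p true 1 h1
  have e1f := bcount_succ' p false 0 h0
  have e2f := bcount_succ' p false 1 h1
  have ezt := bcount_zero p true
  have ezf := bcount_zero p false
  simp only [hp0, hp1] at e1t e2t e1f e2f
  simp at e1t e2t e1f e2f
  have hb2t : bcount p true 2 = 1 := by omega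
  have hb2f : bcount p false 2 = 1 := by omega
  have hpref : ∀ j, j ≤ 2 * k → bcount (shiftTwo p) false j ≤ bcount (shiftTwo p) true j := by
    intro j hjle
    have hct := shiftTwo_count p true j hjle
    have hcf := shiftTwo_count p false j hjle
    have := hd.2 (2 + j)
    omega
  constructor
  · have hct := shiftTwo_count p true (2 * k) (le_refl _)
    have htot := hd.1
    rw [show 2 + 2 * k = 2 * (k + 1) by ring] at hct
    omega
  · intro m
    rcases le_or_gt m (2 * k) with hm | hm
    · exact hpref m hm
    · rw [bcount_stable (shiftTwo p) false (by omega : 2 * k ≤ m),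
        bcount_stable (shiftTwo p) true (by omega : 2 * k ≤ m)]
      exact hpref (2 * k) (le_refl _)

lemma consNE_isDyck {k : ℕ} (q : Fin (2 * k) → Bool) (hq : IsDyckPath' q) :
    IsDyckPath' (consNE q) := by
  have h0 : (0 : ℕ) < 2 * (k + 1) := by omega
  have h1 : (1 : ℕ) < 2 * (k + 1) := by omega
  have e1t := bcount_succ' (consNE q) true 0 h0
  have e2t := bcount_succ' (consNE q) true 1 h1
  have e1f := bcount_succ' (consNE q) false 0 h0
  have e2f := bcount_succ' (consNE q) false 1 h1
  have ezt := bcount_zero (consNE q) true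
  have ezf := bcount_zero (consNE q) false
  simp only [consNE_zero q h0, consNE_one q h1] at e1t e2t e1f e2f
  simp at e1t e2t e1f e2f
  have hpref : ∀ j, j ≤ 2 * k →
      bcount (consNE q) false (2 + j) ≤ bcount (consNE q) true (2 + j) := by
    intro j hjle
    have hct := consNE_count q true j hjle
    have hcf := consNE_count q false j hjle
    have := hq.2 j
    omega
  constructor
  · have hct := consNE_count q true (2 * k) (le_refl _)
    have htot := hq.1
    rw [show 2 + 2 * k = 2 * (k + 1) by ring] at hct
    omega
  · intro m
    match m with
    | 0 => rw [bcount_zero, bcount_zero]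
    | 1 => omega
    | (j + 2) =>
      rcases le_or_gt j (2 * k) with hm | hm
      · rw [show j + 2 = 2 + j by omega]
        exact hpref j hm
      · rw [bcount_stable (consNE q) false (by omega : 2 * (k + 1) ≤ j + 2),
          bcount_stable (consNE q) true (by omega : 2 * (k + 1) ≤ j + 2),
          show 2 * (k + 1) = 2 + 2 * k by ring]
        exact hpref (2 * k) (le_refl _)

lemma consNE_pass11 {k : ℕ} (q : Fin (2 * k) → Bool) (hq : IsDyckPath' q) :
    PassesThrough (consNE q) 1 1 := by
  rw [pass11_iff _ (consNE_isDyck q hq)]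
  exact ⟨consNE_zero q (by omega), consNE_one q (by omega)⟩

def equivA (k : ℕ) :
    {p : Fin (2 * (k + 1)) → Bool // IsDyckPath' p ∧ PassesThrough p 1 1} ≃
      {q : Fin (2 * k) → Bool // IsDyckPath' q} where
  toFun := fun ⟨p, hp⟩ =>
    ⟨shiftTwo p, shiftTwo_isDyck p hp.1 ((pass11_iff p hp.1).mp hp.2).1
      ((pass11_iff p hp.1).mp hp.2).2⟩
  invFun := fun ⟨q, hq⟩ => ⟨consNE q, consNE_isDyck q hq, consNE_pass11 q hq⟩
  left_inv := fun ⟨p, hp⟩ => by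
    have hv := (pass11_iff p hp.1).mp hp.2
    apply Subtype.ext
    funext i
    show (if h : (i : ℕ) < 2 then _ else _) = p i
    by_cases hi : (i : ℕ) < 2
    · rw [dif_pos hi]
      interval_cases hii : (i : ℕ)
      · rw [show p i = p ⟨0, by omega⟩ from congrArg p (Fin.ext hii), hv.1]; simp
      · rw [show p i = p ⟨1, by omega⟩ from congrArg p (Fin.ext hii), hv.2]; simp
    · rw [dif_neg hi]
      show p ⟨2 + ((i : ℕ) - 2), _⟩ = p i
      exact congrArg p (Fin.ext (by show 2 + ((i : ℕ) - 2) = (i : ℕ); omega))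
  right_inv := fun ⟨q, hq⟩ => by
    apply Subtype.ext
    funext i
    show consNE q ⟨2 + i, _⟩ = q i
    show (if h : ((⟨2 + (i : ℕ), _⟩ : Fin (2 * (k + 1))) : ℕ) < 2 then _ else _) = q i
    rw [dif_neg (by show ¬ (2 + (i : ℕ) < 2); omega)]
    exact congrArg q (Fin.ext (by show 2 + (i : ℕ) - 2 = (i : ℕ); omega))

lemma bcount_five {k : ℕ} (p : Fin (2 * (k + 3)) → Bool)
    (hp0 : p ⟨0, by omega⟩ = true) (hp1 : p ⟨1, by omega⟩ = false)
    (hp2 : p ⟨2, by omega⟩ = true) (hp4 : p ⟨4, by omega⟩ = !p ⟨3, by omega⟩) :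
    bcount p true 5 = 3 ∧ bcount p false 5 = 2 := by
  have h0 : (0 : ℕ) < 2 * (k + 3) := by omega
  have h1 : (1 : ℕ) < 2 * (k + 3) := by omega
  have h2 : (2 : ℕ) < 2 * (k + 3) := by omega
  have h3 : (3 : ℕ) < 2 * (k + 3) := by omega
  have h4 : (4 : ℕ) < 2 * (k + 3) := by omega
  have est0 := bcount_succ' p true 0 h0
  have est1 := bcount_succ' p true 1 h1
  have est2 := bcount_succ' p true 2 h2
  have est3 := bcount_succ' p true 3 h3
  have est4 := bcount_succ' p true 4 h4
  have esf0 := bcount_succ' p false 0 h0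
  have esf1 := bcount_succ' p false 1 h1
  have esf2 := bcount_succ' p false 2 h2
  have esf3 := bcount_succ' p false 3 h3
  have esf4 := bcount_succ' p false 4 h4
  have ezt := bcount_zero p true
  have ezf := bcount_zero p false
  cases hb : p ⟨3, h3⟩
  · rw [hb] at hp4; simp at hp4
    simp only [hp0] at est0 esf0
    simp only [hp1] at est1 esf1
    simp only [hp2] at est2 esf2
    simp only [hb] at est3 esf3
    simp only [hp4] at est4 esf4
    simp at est0 est1 est2 est3 est4 esf0 esf1 esf2 esf3 esf4
    omega
  · rw [hb] at hp4; simp at hp4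
    simp only [hp0] at est0 esf0
    simp only [hp1] at est1 esf1
    simp only [hp2] at est2 esf2
    simp only [hb] at est3 esf3
    simp only [hp4] at est4 esf4
    simp at est0 est1 est2 est3 est4 esf0 esf1 esf2 esf3 esf4
    omega

lemma pass32_iff {k : ℕ} (p : Fin (2 * (k + 3)) → Bool) (hd : IsDyckPath' p)
    (hp0 : p ⟨0, by omega⟩ = true) (hp1 : p ⟨1, by omega⟩ = false) :
    PassesThrough p 3 2 ↔
      p ⟨2, by omega⟩ = true ∧ p ⟨4, by omega⟩ = !p ⟨3, by omega⟩ := by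
  have h0 : (0 : ℕ) < 2 * (k + 3) := by omega
  have h1 : (1 : ℕ) < 2 * (k + 3) := by omega
  have h2 : (2 : ℕ) < 2 * (k + 3) := by omega
  have h3 : (3 : ℕ) < 2 * (k + 3) := by omega
  have h4 : (4 : ℕ) < 2 * (k + 3) := by omega
  have est0 := bcount_succ' p true 0 h0
  have est1 := bcount_succ' p true 1 h1
  have est2 := bcount_succ' p true 2 h2
  have est3 := bcount_succ' p true 3 h3
  have est4 := bcount_succ' p true 4 h4
  have esf0 := bcount_succ' p false 0 h0
  have esf1 := bcount_succ' p false 1 h1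
  have esf2 := bcount_succ' p false 2 h2
  have esf3 := bcount_succ' p false 3 h3
  have esf4 := bcount_succ' p false 4 h4
  have ezt := bcount_zero p true
  have ezf := bcount_zero p false
  simp only [hp0] at est0 esf0
  simp only [hp1] at est1 esf1
  simp at est0 est1 esf0 esf1
  constructor
  · rintro ⟨m, hm, hN, hE⟩
    rw [northCount_eq] at hN
    rw [eastCount_eq] at hE
    have hadd := bcount_add_bcount p m
    have hm5 : m = 5 := by omega
    subst hm5
    have hp2 : p ⟨2, h2⟩ = true := by
      cases hh : p ⟨2, h2⟩
      · exfalso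
        rw [hh] at est2 esf2
        simp at est2 esf2
        have := hd.2 3
        omega
      · rfl
    refine ⟨hp2, ?_⟩
    simp only [hp2] at est2 esf2
    simp at est2 esf2
    have hsum : (if p ⟨3, h3⟩ = true then 1 else 0) +
        (if p ⟨4, h4⟩ = true then 1 else 0) = 1 := by
      simp only [show (3:ℕ) + 1 = 4 from rfl, show (4:ℕ) + 1 = 5 from rfl] at est3 est4
      omega
    cases hb3 : p ⟨3, h3⟩
    · cases hb4 : p ⟨4, h4⟩
      · rw [hb3, hb4] at hsum; simp at hsum
      · simp [hb3, hb4]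
    · cases hb4 : p ⟨4, h4⟩
      · simp [hb3, hb4]
      · rw [hb3, hb4] at hsum; simp at hsum
  · rintro ⟨hp2, hp4⟩
    have hv := bcount_five p hp0 hp1 hp2 hp4
    exact ⟨5, by omega, by rw [northCount_eq]; exact hv.1, by rw [eastCount_eq]; exact hv.2⟩

def shiftB {k : ℕ} (p : Fin (2 * (k + 3)) → Bool) : Fin (2 * (k + 1)) → Bool :=
  fun i => if (i : ℕ) = 0 then true else p ⟨4 + i, by omega⟩

def consB {k : ℕ} (b : Bool) (q : Fin (2 * (k + 1)) → Bool) : Fin (2 * (k + 3)) → Bool :=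
  fun i => if (i : ℕ) = 0 then true else if (i : ℕ) = 1 then false
    else if (i : ℕ) = 2 then true else if (i : ℕ) = 3 then b else if (i : ℕ) = 4 then !b
    else q ⟨(i : ℕ) - 4, by omega⟩

lemma shiftB_zero {k : ℕ} (p : Fin (2 * (k + 3)) → Bool) (h : (0:ℕ) < 2 * (k+1)) :
    shiftB p ⟨0, h⟩ = true := by simp [shiftB]

lemma shiftB_count {k : ℕ} (p : Fin (2 * (k + 3)) → Bool) (b : Bool) (j : ℕ)
    (hj : j ≤ 2 * k + 1) :
    bcount (shiftB p) b (1 + j) + bcount p b 5 =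
      bcount p b (5 + j) + bcount (shiftB p) b 1 := by
  have hs : ∀ j (h1 : 1 + j < 2 * (k + 1)) (h2 : 5 + j < 2 * (k + 3)),
      shiftB p ⟨1 + j, h1⟩ = p ⟨5 + j, h2⟩ := by
    intro j h1 h2
    show (if ((⟨1 + j, h1⟩ : Fin (2 * (k + 1))) : ℕ) = 0 then true else _) = p ⟨5 + j, h2⟩
    rw [if_neg (by show ¬ (1 + j = 0); omega)]
    exact congrArg p (Fin.ext (by show 4 + (1 + j) = 5 + j; omega))
  exact bcount_shift p (shiftB p) b 5 1 hs j (by omega) (by omega)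

lemma consB_count {k : ℕ} (b : Bool) (q : Fin (2 * (k + 1)) → Bool) (c : Bool) (j : ℕ)
    (hj : j ≤ 2 * k + 1) :
    bcount q c (1 + j) + bcount (consB b q) c 5 =
      bcount (consB b q) c (5 + j) + bcount q c 1 := by
  have hs : ∀ j (h1 : 1 + j < 2 * (k + 1)) (h2 : 5 + j < 2 * (k + 3)),
      q ⟨1 + j, h1⟩ = consB b q ⟨5 + j, h2⟩ := by
    intro j h1 h2
    show q ⟨1 + j, h1⟩ = (if ((⟨5 + j, h2⟩ : Fin (2 * (k + 3))) : ℕ) = 0 then true else _)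
    rw [if_neg (by show ¬ (5 + j = 0); omega), if_neg (by show ¬ (5 + j = 1); omega),
      if_neg (by show ¬ (5 + j = 2); omega), if_neg (by show ¬ (5 + j = 3); omega),
      if_neg (by show ¬ (5 + j = 4); omega)]
    exact congrArg q (Fin.ext (by show 1 + j = 5 + j - 4; omega))
  exact bcount_shift (consB b q) q c 5 1 hs j (by omega) (by omega)

lemma consB_v0 {k : ℕ} (b : Bool) (q : Fin (2 * (k + 1)) → Bool) (h : (0:ℕ) < 2 * (k+3)) :
    consB b q ⟨0, h⟩ = true := by simp [consB]

lemma consB_v1 {k : ℕ} (b : Bool) (q : Fin (2 * (k + 1)) → Bool) (h : (1:ℕ) < 2 * (k+3)) :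
    consB b q ⟨1, h⟩ = false := by simp [consB]

lemma consB_v2 {k : ℕ} (b : Bool) (q : Fin (2 * (k + 1)) → Bool) (h : (2:ℕ) < 2 * (k+3)) :
    consB b q ⟨2, h⟩ = true := by simp [consB]

lemma consB_v3 {k : ℕ} (b : Bool) (q : Fin (2 * (k + 1)) → Bool) (h : (3:ℕ) < 2 * (k+3)) :
    consB b q ⟨3, h⟩ = b := by simp [consB]

lemma consB_v4 {k : ℕ} (b : Bool) (q : Fin (2 * (k + 1)) → Bool) (h : (4:ℕ) < 2 * (k+3)) :
    consB b q ⟨4, h⟩ = !b := by simp [consB]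

lemma shiftB_one_counts {k : ℕ} (p : Fin (2 * (k + 3)) → Bool) :
    bcount (shiftB p) true 1 = 1 ∧ bcount (shiftB p) false 1 = 0 := by
  have h : (0 : ℕ) < 2 * (k + 1) := by omega
  rw [bcount_one _ true h, bcount_one _ false h, shiftB_zero p h]
  simp

lemma shiftB_isDyck {k : ℕ} (p : Fin (2 * (k + 3)) → Bool) (hd : IsDyckPath' p)
    (hp0 : p ⟨0, by omega⟩ = true) (hp1 : p ⟨1, by omega⟩ = false)
    (hp2 : p ⟨2, by omega⟩ = true) (hp4 : p ⟨4, by omega⟩ = !p ⟨3, by omega⟩) :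
    IsDyckPath' (shiftB p) := by
  have hv := bcount_five p hp0 hp1 hp2 hp4
  have h1c := shiftB_one_counts p
  have hpref : ∀ j, j ≤ 2 * k + 1 →
      bcount (shiftB p) false (1 + j) ≤ bcount (shiftB p) true (1 + j) := by
    intro j hj
    have hct := shiftB_count p true j hj
    have hcf := shiftB_count p false j hj
    have := hd.2 (5 + j)
    omega
  constructor
  · have hct := shiftB_count p true (2 * k + 1) (le_refl _)
    have htot := hd.1
    rw [show (5 + (2 * k + 1)) = 2 * (k + 3) by ring] at hct
    rw [show (2 * (k + 1)) = 1 + (2 * k + 1) by ring]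
    omega
  · intro m
    match m with
    | 0 => rw [bcount_zero, bcount_zero]
    | (j + 1) =>
      rcases le_or_gt j (2 * k + 1) with hm | hm
      · rw [show j + 1 = 1 + j by omega]
        exact hpref j hm
      · rw [bcount_stable (shiftB p) false (by omega : 2 * (k + 1) ≤ j + 1),
          bcount_stable (shiftB p) true (by omega : 2 * (k + 1) ≤ j + 1),
          show 2 * (k + 1) = 1 + (2 * k + 1) by ring]
        exact hpref (2 * k + 1) (le_refl _)

lemma consB_isDyck {k : ℕ} (b : Bool) (q : Fin (2 * (k + 1)) → Bool) (hq : IsDyckPath' q) :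
    IsDyckPath' (consB b q) := by
  have hq0 : q ⟨0, by omega⟩ = true := dyck_first q hq
  have hq1t : bcount q true 1 = 1 := by
    rw [bcount_one q true (by omega), hq0]; simp
  have hq1f : bcount q false 1 = 0 := by
    rw [bcount_one q false (by omega), hq0]; simp
  have hv := bcount_five (consB b q) (consB_v0 b q (by omega)) (consB_v1 b q (by omega))
    (consB_v2 b q (by omega)) (by rw [consB_v4 b q (by omega), consB_v3 b q (by omega)])
  have h0 : (0 : ℕ) < 2 * (k + 3) := by omega
  have h1 : (1 : ℕ) < 2 * (k + 3) := by omega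
  have h2 : (2 : ℕ) < 2 * (k + 3) := by omega
  have h3 : (3 : ℕ) < 2 * (k + 3) := by omega
  have h4 : (4 : ℕ) < 2 * (k + 3) := by omega
  have est0 := bcount_succ' (consB b q) true 0 h0
  have est1 := bcount_succ' (consB b q) true 1 h1
  have est2 := bcount_succ' (consB b q) true 2 h2
  have est3 := bcount_succ' (consB b q) true 3 h3
  have esf0 := bcount_succ' (consB b q) false 0 h0
  have esf1 := bcount_succ' (consB b q) false 1 h1
  have esf2 := bcount_succ' (consB b q) false 2 h2
  have esf3 := bcount_succ' (consB b q) false 3 h3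
  have ezt := bcount_zero (consB b q) true
  have ezf := bcount_zero (consB b q) false
  simp only [consB_v0 b q h0] at est0 esf0
  simp only [consB_v1 b q h1] at est1 esf1
  simp only [consB_v2 b q h2] at est2 esf2
  simp only [consB_v3 b q h3] at est3 esf3
  simp at est0 est1 est2 esf0 esf1 esf2
  have haux : (if b = true then 1 else 0) + (if b = false then 1 else 0) = 1 := by
    cases b <;> simp
  have hpref : ∀ j, j ≤ 2 * k + 1 →
      bcount (consB b q) false (5 + j) ≤ bcount (consB b q) true (5 + j) := by
    intro j hj
    have hct := consB_count b q true j hj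
    have hcf := consB_count b q false j hj
    have := hq.2 (1 + j)
    omega
  constructor
  · have hct := consB_count b q true (2 * k + 1) (le_refl _)
    have htot := hq.1
    rw [show (5 + (2 * k + 1)) = 2 * (k + 3) by ring] at hct
    rw [show (2 * (k + 1)) = 1 + (2 * k + 1) by ring] at htot
    omega
  · intro m
    match m with
    | 0 => rw [bcount_zero, bcount_zero]
    | 1 => omega
    | 2 => omega
    | 3 => omega
    | 4 =>
      simp only [show (3:ℕ) + 1 = 4 from rfl] at est3 esf3
      omega
    | (j + 5) =>
      rcases le_or_gt j (2 * k + 1) with hm | hm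
      · rw [show j + 5 = 5 + j by omega]
        exact hpref j hm
      · rw [bcount_stable (consB b q) false (by omega : 2 * (k + 3) ≤ j + 5),
          bcount_stable (consB b q) true (by omega : 2 * (k + 3) ≤ j + 5),
          show 2 * (k + 3) = 5 + (2 * k + 1) by ring]
        exact hpref (2 * k + 1) (le_refl _)

lemma consB_pass11 {k : ℕ} (b : Bool) (q : Fin (2 * (k + 1)) → Bool) (hq : IsDyckPath' q) :
    PassesThrough (consB b q) 1 1 := by
  rw [pass11_iff (k := k + 2) _ (consB_isDyck b q hq)]
  exact ⟨consB_v0 b q (by omega), consB_v1 b q (by omega)⟩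

lemma consB_pass32 {k : ℕ} (b : Bool) (q : Fin (2 * (k + 1)) → Bool) (hq : IsDyckPath' q) :
    PassesThrough (consB b q) 3 2 := by
  rw [pass32_iff _ (consB_isDyck b q hq) (consB_v0 b q (by omega)) (consB_v1 b q (by omega))]
  exact ⟨consB_v2 b q (by omega), by rw [consB_v4 b q (by omega), consB_v3 b q (by omega)]⟩

def equivB (k : ℕ) :
    {p : Fin (2 * (k + 3)) → Bool //
        IsDyckPath' p ∧ PassesThrough p 1 1 ∧ PassesThrough p 3 2} ≃
      Bool × {q : Fin (2 * (k + 1)) → Bool // IsDyckPath' q} where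
  toFun := fun ⟨p, hp⟩ =>
    (p ⟨3, by omega⟩, ⟨shiftB p, by
      have hv11 := (pass11_iff (k := k + 2) p hp.1).mp hp.2.1
      have hv32 := (pass32_iff p hp.1 hv11.1 hv11.2).mp hp.2.2
      exact shiftB_isDyck p hp.1 hv11.1 hv11.2 hv32.1 hv32.2⟩)
  invFun := fun ⟨b, q, hq⟩ =>
    ⟨consB b q, consB_isDyck b q hq, consB_pass11 b q hq, consB_pass32 b q hq⟩
  left_inv := fun ⟨p, hp⟩ => by
    have hv11 := (pass11_iff (k := k + 2) p hp.1).mp hp.2.1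
    have hv32 := (pass32_iff p hp.1 hv11.1 hv11.2).mp hp.2.2
    apply Subtype.ext
    funext i
    show (if (i : ℕ) = 0 then true else if (i : ℕ) = 1 then false
      else if (i : ℕ) = 2 then true else if (i : ℕ) = 3 then p ⟨3, _⟩
      else if (i : ℕ) = 4 then !p ⟨3, _⟩
      else shiftB p ⟨(i : ℕ) - 4, _⟩) = p i
    by_cases hi0 : (i : ℕ) = 0
    · rw [if_pos hi0, show p i = p ⟨0, by omega⟩ from congrArg p (Fin.ext hi0), hv11.1]
    rw [if_neg hi0]
    by_cases hi1 : (i : ℕ) = 1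
    · rw [if_pos hi1, show p i = p ⟨1, by omega⟩ from congrArg p (Fin.ext hi1), hv11.2]
    rw [if_neg hi1]
    by_cases hi2 : (i : ℕ) = 2
    · rw [if_pos hi2, show p i = p ⟨2, by omega⟩ from congrArg p (Fin.ext hi2), hv32.1]
    rw [if_neg hi2]
    by_cases hi3 : (i : ℕ) = 3
    · rw [if_pos hi3, show p i = p ⟨3, by omega⟩ from congrArg p (Fin.ext hi3)]
    rw [if_neg hi3]
    by_cases hi4 : (i : ℕ) = 4
    · rw [if_pos hi4, show p i = p ⟨4, by omega⟩ from congrArg p (Fin.ext hi4), hv32.2]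
    rw [if_neg hi4]
    show (if ((i : ℕ) - 4 : ℕ) = 0 then true else p ⟨4 + ((i : ℕ) - 4), _⟩) = p i
    rw [if_neg (by omega)]
    exact congrArg p (Fin.ext (by show 4 + ((i : ℕ) - 4) = (i : ℕ); omega))
  right_inv := fun ⟨b, q, hq⟩ => by
    have hq0 : q ⟨0, by omega⟩ = true := dyck_first q hq
    refine Prod.ext ?_ ?_
    · exact consB_v3 b q (by omega)
    · apply Subtype.ext
      funext i
      show (if (i : ℕ) = 0 then true else consB b q ⟨4 + i, _⟩) = q i
      by_cases hi0 : (i : ℕ) = 0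
      · rw [if_pos hi0, show q i = q ⟨0, by omega⟩ from congrArg q (Fin.ext hi0), hq0]
      rw [if_neg hi0]
      show (if (4 + (i : ℕ) : ℕ) = 0 then true else if (4 + (i : ℕ) : ℕ) = 1 then false
        else if (4 + (i : ℕ) : ℕ) = 2 then true else if (4 + (i : ℕ) : ℕ) = 3 then b
        else if (4 + (i : ℕ) : ℕ) = 4 then !b
        else q ⟨(4 + (i : ℕ)) - 4, _⟩) = q i
      rw [if_neg (by omega), if_neg (by omega), if_neg (by omega), if_neg (by omega),
        if_neg (by omega)]
      exact congrArg q (Fin.ext (by show 4 + (i : ℕ) - 4 = (i : ℕ); omega))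

lemma card_dyck_subtype (m : ℕ) :
    Nat.card {q : Fin (2 * m) → Bool // IsDyckPath' q} = catalan m := by
  rw [Nat.card_congr (dyckEquiv m), Nat.card_eq_fintype_card]
  exact DyckWord.card_dyckWord_semilength_eq_catalan m

/-- For `n ≥ 3`, the number of Dyck paths of length `n` passing through `(1,1)`
but avoiding `(3,2)` equals `C_{n-1} - 2 * C_{n-2}`. -/
theorem card_dyck_through_avoiding (n : ℕ) (hn : 3 ≤ n) :
    {p : Fin (2 * n) → Bool | IsDyckPath p ∧ PassesThrough p 1 1 ∧
        ¬ PassesThrough p 3 2}.ncard = catalan (n - 1) - 2 * catalan (n - 2) := by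
  obtain ⟨k, rfl⟩ : ∃ k, n = k + 3 := ⟨n - 3, by omega⟩
  have hA : {p : Fin (2 * (k + 3)) → Bool | IsDyckPath p ∧ PassesThrough p 1 1}.ncard
      = catalan (k + 2) := by
    rw [← Nat.card_coe_set_eq]
    have e : ↑{p : Fin (2 * (k + 3)) → Bool | IsDyckPath p ∧ PassesThrough p 1 1} ≃
        {q : Fin (2 * (k + 2)) → Bool // IsDyckPath' q} := equivA (k + 2)
    rw [Nat.card_congr e, card_dyck_subtype]
  have hB : {p : Fin (2 * (k + 3)) → Bool | IsDyckPath p ∧ PassesThrough p 1 1 ∧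
      PassesThrough p 3 2}.ncard = 2 * catalan (k + 1) := by
    rw [← Nat.card_coe_set_eq]
    have e : ↑{p : Fin (2 * (k + 3)) → Bool | IsDyckPath p ∧ PassesThrough p 1 1 ∧
        PassesThrough p 3 2} ≃ Bool × {q : Fin (2 * (k + 1)) → Bool // IsDyckPath' q} := equivB k
    rw [Nat.card_congr e, Nat.card_prod, card_dyck_subtype]
    simp [Nat.card_eq_fintype_card]
  have hsub : {p : Fin (2 * (k + 3)) → Bool | IsDyckPath p ∧ PassesThrough p 1 1 ∧
      PassesThrough p 3 2} ⊆ {p | IsDyckPath p ∧ PassesThrough p 1 1} :=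
    fun p hp => ⟨hp.1, hp.2.1⟩
  have hdiff : {p : Fin (2 * (k + 3)) → Bool | IsDyckPath p ∧ PassesThrough p 1 1 ∧
      ¬ PassesThrough p 3 2} =
      {p | IsDyckPath p ∧ PassesThrough p 1 1} \
        {p | IsDyckPath p ∧ PassesThrough p 1 1 ∧ PassesThrough p 3 2} := by
    ext p
    simp only [Set.mem_setOf_eq, Set.mem_diff]
    tauto
  rw [show (k + 3) - 1 = k + 2 from rfl, show (k + 3) - 2 = k + 1 from rfl]
  rw [hdiff, Set.ncard_diff hsub (Set.toFinite _), hA, hB]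
end

section
/- For every natural number n, the number of parking functions of length n equals (n+1)^{n-1} (with the value 1 for n = 0). -/
/-- `f : Fin n → ℕ` is a parking function of length `n`: each value satisfies
`1 ≤ f i ≤ n`, and its nondecreasing rearrangement `b` satisfies `b i ≤ i`
(1-indexed). -/
def IsParkingFunction (n : ℕ) (f : Fin n → ℕ) : Prop :=
  (∀ i : Fin n, 1 ≤ f i ∧ f i ≤ n) ∧
  ∀ i : ℕ, ∀ hi : i < ((List.ofFn f).mergeSort (fun a b => decide (a ≤ b))).length,
    ((List.ofFn f).mergeSort (fun a b => decide (a ≤ b))).get ⟨i, hi⟩ ≤ i + 1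

/-! ### Auxiliary machinery: Pollak's circle argument -/

private def pkd (n : ℕ) (g : Fin n → ZMod (n+1)) (x : ZMod (n+1)) : ℕ :=
  (Finset.univ.filter fun i => g i = x).card

private def pkT (n : ℕ) (g : Fin n → ZMod (n+1)) (j : ℕ) : ℤ :=
  (∑ t ∈ Finset.range j, (pkd n g (t : ZMod (n+1)) : ℤ)) - j

private def PkGood (n : ℕ) (g : Fin n → ZMod (n+1)) : Prop :=
  ∀ j, j ≤ n → j ≤ (Finset.univ.filter fun i => (g i).val < j).card

private theorem pkd_total (n : ℕ) (g : Fin n → ZMod (n+1)) :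
    ∑ x : ZMod (n+1), pkd n g x = n := by
  have := (Finset.card_eq_sum_card_fiberwise (f := g) (s := Finset.univ) (t := Finset.univ)
    (fun i _ => Finset.mem_univ (g i))).symm
  simpa [pkd, Finset.card_univ] using this

private theorem pk_sum_window (n : ℕ) (g : Fin n → ZMod (n+1)) (j : ℕ) :
    ∑ s ∈ Finset.range (n+1), (pkd n g ((j + s : ℕ) : ZMod (n+1)) : ℤ) = (n : ℤ) := by
  rw [show ((n:ℤ)) = ((∑ x : ZMod (n+1), pkd n g x : ℕ) : ℤ) by rw [pkd_total]]
  push_cast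
  refine Finset.sum_nbij' (fun s => ((j + s : ℕ) : ZMod (n+1)))
    (fun x => (x - (j : ZMod (n+1))).val) ?_ ?_ ?_ ?_ ?_
  · intro s _; exact Finset.mem_univ _
  · intro x _; exact Finset.mem_range.mpr (ZMod.val_lt _)
  · intro s hs
    push_cast
    simp only [add_sub_cancel_left]
    exact ZMod.val_cast_of_lt (Finset.mem_range.mp hs)
  · intro x _
    push_cast
    rw [ZMod.natCast_rightInverse _]
    ring
  · intro s _; push_cast; ring_nf

private theorem pkT_period (n : ℕ) (g : Fin n → ZMod (n+1)) (j : ℕ) :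
    pkT n g (j + (n+1)) = pkT n g j - 1 := by
  unfold pkT
  rw [Finset.range_eq_Ico, show j + (n+1) = (n+1) + j by ring]
  rw [← Finset.sum_Ico_consecutive _ (Nat.zero_le j) (Nat.le_add_left j (n+1))]
  have : ∑ t ∈ Finset.Ico j ((n+1)+j), (pkd n g (t : ZMod (n+1)) : ℤ) = (n : ℤ) := by
    rw [Finset.sum_Ico_eq_sum_range]
    simpa using pk_sum_window n g j
  rw [this]
  push_cast
  rw [← Finset.range_eq_Ico]
  ring

private theorem pk_count (n : ℕ) (g : Fin n → ZMod (n+1)) (c : ZMod (n+1)) (j : ℕ) (hj : j ≤ n+1) :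
    ((Finset.univ.filter fun i => (g i - c).val < j).card : ℤ)
      = pkT n g (c.val + j) - pkT n g c.val + j := by
  set W : Finset (ZMod (n+1)) := (Finset.range j).image (fun s : ℕ => c + (s : ZMod (n+1))) with hW
  have hmemW : ∀ x : ZMod (n+1), x ∈ W ↔ (x - c).val < j := by
    intro x
    constructor
    · intro hx
      obtain ⟨s, hs, rfl⟩ := Finset.mem_image.mp hx
      rw [Finset.mem_range] at hs
      rw [add_sub_cancel_left, ZMod.val_cast_of_lt (lt_of_lt_of_le hs hj)]
      exact hs
    · intro hx
      refine Finset.mem_image.mpr ⟨(x - c).val, Finset.mem_range.mpr hx, ?_⟩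
      rw [ZMod.natCast_rightInverse _]
      ring
  have hset : (Finset.univ.filter fun i => (g i - c).val < j)
      = Finset.univ.filter fun i => g i ∈ W := by
    ext i; simp [hmemW]
  have hcard : (Finset.univ.filter fun i => g i ∈ W).card = ∑ x ∈ W, pkd n g x := by
    rw [Finset.card_eq_sum_card_fiberwise (f := g) (s := Finset.univ.filter fun i => g i ∈ W) (t := W)
      (fun i hi => (Finset.mem_filter.mp hi).2)]
    refine Finset.sum_congr rfl fun x hx => ?_
    unfold pkd
    congr 1
    ext i
    simp only [Finset.mem_filter, Finset.mem_univ, true_and]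
    constructor
    · exact fun h => h.2
    · intro h; exact ⟨h ▸ hx, h⟩
  have hinj : ∀ s1 ∈ Finset.range j, ∀ s2 ∈ Finset.range j,
      c + (s1 : ZMod (n+1)) = c + (s2 : ZMod (n+1)) → s1 = s2 := by
    intro s1 h1 s2 h2 h
    have := add_left_cancel h
    have h1' := ZMod.val_cast_of_lt (lt_of_lt_of_le (Finset.mem_range.mp h1) hj)
    have h2' := ZMod.val_cast_of_lt (lt_of_lt_of_le (Finset.mem_range.mp h2) hj)
    rw [← h1', ← h2', this]
  have himg : ∑ x ∈ W, (pkd n g x : ℤ) = ∑ s ∈ Finset.range j, (pkd n g (c + (s:ZMod (n+1))) : ℤ) :=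
    Finset.sum_image hinj
  have h1 : c.val + j - c.val = j := by omega
  have h2 : ∀ s : ℕ, ((c.val + s : ℕ) : ZMod (n+1)) = c + (s : ZMod (n+1)) := by
    intro s; push_cast; rw [ZMod.natCast_rightInverse _]
  have hA : ∑ t ∈ Finset.Ico c.val (c.val + j), (pkd n g (t : ZMod (n+1)) : ℤ)
      = ∑ s ∈ Finset.range j, (pkd n g (c + (s:ZMod (n+1))) : ℤ) := by
    rw [Finset.sum_Ico_eq_sum_range, h1]
    exact Finset.sum_congr rfl fun s _ => by rw [h2]
  have hB : ∑ t ∈ Finset.range (c.val + j), (pkd n g (t : ZMod (n+1)) : ℤ)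
      = ∑ t ∈ Finset.range c.val, (pkd n g (t : ZMod (n+1)) : ℤ)
        + ∑ s ∈ Finset.range j, (pkd n g (c + (s:ZMod (n+1))) : ℤ) := by
    rw [← hA, Finset.range_eq_Ico,
      ← Finset.sum_Ico_consecutive _ (Nat.zero_le c.val) (Nat.le_add_right c.val j), Finset.range_eq_Ico]
  have hT : pkT n g (c.val + j) - pkT n g c.val + j
      = ∑ s ∈ Finset.range j, (pkd n g (c + (s:ZMod (n+1))) : ℤ) := by
    unfold pkT; rw [hB]; push_cast; ring
  rw [hset, hcard, hT, ← himg]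
  push_cast
  rfl

private theorem pk_good_shift_iff (n : ℕ) (g : Fin n → ZMod (n+1)) (c : ZMod (n+1)) :
    PkGood n (fun i => g i - c) ↔ ∀ j, j ≤ n → pkT n g c.val ≤ pkT n g (c.val + j) := by
  unfold PkGood
  constructor <;> intro h j hj
  · have h1 := pk_count n g c j (by omega)
    have h2 : (j : ℤ) ≤ ((Finset.univ.filter fun i => (g i - c).val < j).card : ℤ) := by
      exact_mod_cast h j hj
    linarith
  · have h1 := pk_count n g c j (by omega)
    have h2 := h j hj
    have h3 : (j : ℤ) ≤ ((Finset.univ.filter fun i => (g i - c).val < j).card : ℤ) := by linarith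
    exact_mod_cast h3

private theorem pk_exists_unique (n : ℕ) (g : Fin n → ZMod (n+1)) :
    ∃! c : ZMod (n+1), ∀ j, j ≤ n → pkT n g c.val ≤ pkT n g (c.val + j) := by
  classical
  set T := pkT n g with hT
  have hper : ∀ x, T (x + (n+1)) = T x - 1 := pkT_period n g
  have hne : (Finset.range (n+1)).Nonempty := ⟨0, by simp⟩
  set M := (Finset.range (n+1)).inf' hne T with hM
  have hex : ∃ a, a < n+1 ∧ T a = M := by
    obtain ⟨a, ha, h⟩ := Finset.exists_mem_eq_inf' hne T
    exact ⟨a, Finset.mem_range.mp ha, h.symm⟩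
  set a := Nat.find hex with ha
  obtain ⟨halt, haM⟩ := Nat.find_spec hex
  have hmin : ∀ t, t < n+1 → M ≤ T t := fun t ht => Finset.inf'_le T (Finset.mem_range.mpr ht)
  have hfirst : ∀ t, t < a → M < T t := by
    intro t ht
    have h2 := Nat.find_min hex ht
    have h3 : t < n+1 := lt_trans ht halt
    have h4 := hmin t h3
    rcases lt_or_eq_of_le h4 with h5 | h5
    · exact h5
    · exact absurd ⟨h3, h5.symm⟩ h2
  have key : ∀ j, j ≤ n → T a ≤ T (a + j) := by
    intro j hj
    rw [haM]
    by_cases hcase : a + j < n+1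
    · exact hmin _ hcase
    · have hb : a + j - (n+1) < a := by omega
      have heq : T (a + j) = T (a + j - (n+1)) - 1 := by
        rw [← hper]; congr 1; omega
      have := hfirst _ hb
      omega
  have hval : ((a : ZMod (n+1))).val = a := ZMod.val_cast_of_lt halt
  have main : ∀ x y : ℕ, x < n+1 → y < n+1 → (∀ j, j ≤ n → T x ≤ T (x + j)) →
      (∀ j, j ≤ n → T y ≤ T (y + j)) → ¬ x < y := by
    intro x y hx hy hQx hQy hxy
    have h1 : T x ≤ T y := by
      have := hQx (y - x) (by omega)
      rwa [show x + (y-x) = y by omega] at this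
    have h2 : T y ≤ T (x + (n+1)) := by
      have := hQy (x + (n+1) - y) (by omega)
      rwa [show y + (x + (n+1) - y) = x + (n+1) by omega] at this
    rw [hper] at h2
    omega
  refine ⟨(a : ZMod (n+1)), ?_, ?_⟩
  · intro j hj
    rw [hval]
    exact key j hj
  · intro c' hc'
    have hc'lt : c'.val < n+1 := ZMod.val_lt c'
    have hvaleq : c'.val = a := by
      rcases Nat.lt_trichotomy c'.val a with h | h | h
      · exact absurd h (main c'.val a hc'lt halt hc' key)
      · exact h
      · exact absurd h (main a c'.val halt hc'lt key hc')
    have := congrArg (Nat.cast : ℕ → ZMod (n+1)) hvaleq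
    rwa [ZMod.natCast_rightInverse c'] at this

private theorem pk_card_good (n : ℕ) :
    Nat.card {g : Fin n → ZMod (n+1) // PkGood n g} * (n+1) = (n+1)^n := by
  classical
  have hbij : Function.Bijective
      (fun p : {g : Fin n → ZMod (n+1) // PkGood n g} × ZMod (n+1) =>
        (fun i => p.1.1 i + p.2 : Fin n → ZMod (n+1))) := by
    constructor
    · rintro ⟨⟨g1, h1⟩, c1⟩ ⟨⟨g2, h2⟩, c2⟩ h
      simp only at h
      set hfun : Fin n → ZMod (n+1) := fun i => g1 i + c1 with hf
      have e1 : (fun i => hfun i - c1) = g1 := by funext i; simp [hf]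
      have e2 : (fun i => hfun i - c2) = g2 := by
        funext i
        show hfun i - c2 = g2 i
        have hthis : hfun i = g2 i + c2 := congrFun h i
        rw [hthis]; ring
      have p1 : ∀ j, j ≤ n → pkT n hfun c1.val ≤ pkT n hfun (c1.val + j) :=
        (pk_good_shift_iff n hfun c1).mp (by rw [e1]; exact h1)
      have p2 : ∀ j, j ≤ n → pkT n hfun c2.val ≤ pkT n hfun (c2.val + j) :=
        (pk_good_shift_iff n hfun c2).mp (by rw [e2]; exact h2)
      obtain ⟨c, -, huniq⟩ := pk_exists_unique n hfun
      have hc1 : c1 = c := huniq c1 p1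
      have hc2 : c2 = c := huniq c2 p2
      have hcc : c1 = c2 := hc1.trans hc2.symm
      subst hcc
      have hg : g1 = g2 := by
        funext i
        have := congrFun h i
        exact add_right_cancel this
      simp [hg]
    · intro h
      obtain ⟨c, hc, -⟩ := pk_exists_unique n h
      refine ⟨⟨⟨fun i => h i - c, (pk_good_shift_iff n h c).mpr hc⟩, c⟩, ?_⟩
      funext i
      simp
  have hcard := Nat.card_eq_of_bijective _ hbij
  rw [Nat.card_prod, Nat.card_zmod] at hcard
  rw [hcard]
  simp [Nat.card_eq_fintype_card]

/-! ### Relating `IsParkingFunction` to the counting criterion -/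

private theorem pk_card_filter_countP {n : ℕ} (f : Fin n → ℕ) (p : ℕ → Prop) [DecidablePred p] :
    (Finset.univ.filter fun i => p (f i)).card = (List.ofFn f).countP (fun x => decide (p x)) := by
  rw [List.ofFn_eq_map, List.countP_map, List.countP_eq_length_filter, Fin.univ_def]
  simp only [Finset.filter, Finset.card_mk, Multiset.filter_coe, Multiset.coe_card]
  rfl

private theorem pk_sorted_iff_count (l : List ℕ) (hs : l.Pairwise (· ≤ ·)) :
    (∀ i (hi : i < l.length), l.get ⟨i, hi⟩ ≤ i + 1) ↔
    (∀ j, j ≤ l.length → j ≤ l.countP (fun x => decide (x ≤ j))) := by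
  constructor
  · intro h j hj
    have h1 : (l.take j).countP (fun x => decide (x ≤ j)) = (l.take j).length := by
      rw [List.countP_eq_length]
      intro a ha
      rw [List.mem_take_iff_getElem] at ha
      obtain ⟨i, hm, rfl⟩ := ha
      simp only [lt_inf_iff] at hm
      simpa using le_trans (by simpa using h i hm.2) hm.1
    calc j = (l.take j).length := by simp [hj]
    _ = (l.take j).countP (fun x => decide (x ≤ j)) := h1.symm
    _ ≤ l.countP (fun x => decide (x ≤ j)) := by
        conv_rhs => rw [← List.take_append_drop j l]
        rw [List.countP_append]; omega
  · intro h i hi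
    by_contra hc
    push_neg at hc
    have hj := h (i+1) hi
    rw [← List.take_append_drop i l, List.countP_append] at hj
    have h1 : (l.take i).countP (fun x => decide (x ≤ i+1)) ≤ i :=
      le_trans List.countP_le_length (by simp)
    have h2 : (l.drop i).countP (fun x => decide (x ≤ i+1)) = 0 := by
      rw [List.countP_eq_zero]
      intro a ha
      have hdrop : l.drop i = l.get ⟨i, hi⟩ :: l.drop (i+1) := by
        simpa using List.drop_eq_getElem_cons hi
      rw [hdrop, List.mem_cons] at ha
      rcases ha with rfl | ha
      · simpa using hc
      · have hp : (l.drop i).Pairwise (· ≤ ·) := hs.drop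
        rw [hdrop, List.pairwise_cons] at hp
        have := hp.1 a ha
        simp only [decide_eq_true_eq]
        omega
    omega

private theorem pk_parking_iff_count (n : ℕ) (f : Fin n → ℕ) :
    IsParkingFunction n f ↔ ((∀ i, 1 ≤ f i ∧ f i ≤ n) ∧
      ∀ j, j ≤ n → j ≤ (Finset.univ.filter fun i => f i ≤ j).card) := by
  unfold IsParkingFunction
  set l := (List.ofFn f).mergeSort (fun a b => decide (a ≤ b)) with hl
  have hsorted : l.Pairwise (· ≤ ·) := by
    have := List.pairwise_mergeSort (le := fun a b : ℕ => decide (a ≤ b))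
      (fun a b c hab hbc => by simp only [decide_eq_true_eq] at *; omega)
      (fun a b => by simp only [Bool.or_eq_true, decide_eq_true_eq]; omega)
      (List.ofFn f)
    simpa [hl] using this
  have hperm := List.mergeSort_perm (List.ofFn f) (fun a b => decide (a ≤ b))
  have hlen : l.length = n := by rw [hperm.length_eq, List.length_ofFn]
  have hcnt : ∀ j : ℕ, l.countP (fun x => decide (x ≤ j))
      = (Finset.univ.filter fun i => f i ≤ j).card := by
    intro j
    rw [hperm.countP_eq]
    exact (pk_card_filter_countP f (fun x => x ≤ j)).symm
  constructor
  · rintro ⟨h1, h2⟩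
    refine ⟨h1, fun j hj => ?_⟩
    have := (pk_sorted_iff_count l hsorted).mp h2 j (by omega)
    rwa [hcnt] at this
  · rintro ⟨h1, h2⟩
    refine ⟨h1, (pk_sorted_iff_count l hsorted).mpr fun j hj => ?_⟩
    rw [hcnt]
    exact h2 j (by omega)

private theorem pk_card_eq (n : ℕ) :
    Nat.card {f : Fin n → ℕ | IsParkingFunction n f}
      = Nat.card {g : Fin n → ZMod (n+1) // PkGood n g} := by
  classical
  refine Nat.card_eq_of_bijective
    (fun p => ⟨fun i => ((p.1 i - 1 : ℕ) : ZMod (n+1)), ?_⟩) ⟨?_, ?_⟩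
  · -- PkGood of the image
    obtain ⟨hb, hcnt⟩ := (pk_parking_iff_count n p.1).mp p.2
    intro j hj
    have hval : ∀ i, (((p.1 i - 1 : ℕ) : ZMod (n+1))).val = p.1 i - 1 := fun i =>
      ZMod.val_cast_of_lt (by have := (hb i).2; omega)
    have : (Finset.univ.filter fun i => (((p.1 i - 1 : ℕ) : ZMod (n+1))).val < j)
        = Finset.univ.filter fun i => p.1 i ≤ j := by
      apply Finset.filter_congr
      intro i _
      rw [hval i]
      have := (hb i).1
      omega
    rw [this]
    exact hcnt j hj
  · -- injective
    intro p q h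
    obtain ⟨hb1, -⟩ := (pk_parking_iff_count n p.1).mp p.2
    obtain ⟨hb2, -⟩ := (pk_parking_iff_count n q.1).mp q.2
    apply Subtype.ext
    funext i
    have hi : ((p.1 i - 1 : ℕ) : ZMod (n+1)) = ((q.1 i - 1 : ℕ) : ZMod (n+1)) :=
      congrFun (congrArg Subtype.val h) i
    have hv1 : (((p.1 i - 1 : ℕ) : ZMod (n+1))).val = p.1 i - 1 :=
      ZMod.val_cast_of_lt (by have := (hb1 i).2; omega)
    have hv2 : (((q.1 i - 1 : ℕ) : ZMod (n+1))).val = q.1 i - 1 :=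
      ZMod.val_cast_of_lt (by have := (hb2 i).2; omega)
    have heq : p.1 i - 1 = q.1 i - 1 := by rw [← hv1, ← hv2, hi]
    have h1 := (hb1 i).1
    have h2 := (hb2 i).1
    omega
  · -- surjective
    rintro ⟨g, hg⟩
    have hall : ∀ i, (g i).val < n := by
      intro i
      have h1 := hg n le_rfl
      have h2 : (Finset.univ.filter fun i => (g i).val < n) = Finset.univ := by
        apply Finset.eq_univ_of_card
        have := Finset.card_le_univ (Finset.univ.filter fun i => (g i).val < n)
        simp only [Finset.card_univ, Fintype.card_fin] at *
        omega
      have := Finset.mem_filter.mp (h2 ▸ Finset.mem_univ i)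
      exact this.2
    set f : Fin n → ℕ := fun i => (g i).val + 1 with hf
    have hbf : ∀ i, 1 ≤ f i ∧ f i ≤ n := fun i => ⟨by simp [hf], by have := hall i; simp only [hf]; omega⟩
    have hpf : IsParkingFunction n f := by
      rw [pk_parking_iff_count]
      refine ⟨hbf, fun j hj => ?_⟩
      have : (Finset.univ.filter fun i => f i ≤ j)
          = Finset.univ.filter fun i => (g i).val < j := by
        apply Finset.filter_congr
        intro i _
        simp only [hf]
        omega
      rw [this]
      exact hg j hj
    refine ⟨⟨f, hpf⟩, ?_⟩
    apply Subtype.ext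
    funext i
    simp only [hf]
    simp only [Nat.add_sub_cancel]
    exact ZMod.natCast_rightInverse (g i)

/-- The number of parking functions of length `n` is `(n+1)^(n-1)`. -/
theorem card_parking_functions (n : ℕ) :
    {f : Fin n → ℕ | IsParkingFunction n f}.ncard = (n + 1) ^ (n - 1) := by
  rw [← Nat.card_coe_set_eq, pk_card_eq n]
  have h2 := pk_card_good n
  cases n with
  | zero =>
    simp only [pow_zero, Nat.mul_one] at h2
    simpa using h2
  | succ k =>
    have h3 : (k + 1 + 1) ^ (k + 1) = (k + 1 + 1) ^ k * (k + 1 + 1) := pow_succ _ _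
    rw [h3] at h2
    have := Nat.eq_of_mul_eq_mul_right (by omega : 0 < k + 1 + 1) h2
    simpa using this
end

section
/- The q,t-symmetric polynomial Σ_{g ∈ DS_n} q^{dinv(g)} t^{area(g)} specializes at q = 1 and at t = 1 to the same polynomial: Σ_{g ∈ DS_n} q^{area(g)} = Σ_{g ∈ DS_n} q^{dinv(g)}, i.e., the statistics area and dinv are equidistributed on Dyck sequences of length n. -/
/-!
Even the pairs `(dinv, number of zeros)` and `(area, last entry + 1)` are equidistributed,
because both satisfy the same recursion in the second statistic `k`:

* A Dyck sequence with `k` zeros is determined by the Dyck sequence `x` of length `n - k`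
  obtained by deleting its zeros and lowering the other entries by one, together with the
  multiset of `k - 1` labels "number of `1`s before this zero" of its non-initial zeros; the
  labels are at most the number of zeros of `x`, and `dinv` grows by `k.choose 2` plus
  their sum.
* A Dyck sequence ending in `k - 1` is determined by its prefix `x` of length `n - k` and its
  final block `[t₀, t₁ + 1, …, t_{k-2} + (k - 2), k - 1]`, where `t` is weakly decreasing with
  entries at most `last x + 1`; `area` grows by `k.choose 2` plus the sum of `t`.

Strong induction on `n` then matches the two sides.
-/

open Finset

abbrev IsDyckStep (a b : ℕ) : Prop := b ≤ a + 1

def IsDyckList (l : List ℕ) : Prop := l.IsChain IsDyckStep ∧ ∀ a ∈ l.head?, a = 0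

def lastSucc (l : List ℕ) : ℕ := l.getLast?.elim 0 (· + 1)

def dyckLists : ℕ → Finset (List ℕ)
  | 0 => {[]}
  | n + 1 => (dyckLists n).biUnion fun x => (range (lastSucc x + 1)).image (x ++ [·])

def dinvList : List ℕ → ℕ
  | [] => 0
  | a :: t => t.countP (fun b => a = b ∨ a = b + 1) + dinvList t

theorem isDyckList_nil : IsDyckList [] := ⟨.nil, by simp⟩

theorem isDyckList_cons_iff {a : ℕ} {t : List ℕ} :
    IsDyckList (a :: t) ↔ a = 0 ∧ (0 :: t).IsChain IsDyckStep := by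
  rw [IsDyckList, List.head?_cons]
  constructor
  · rintro ⟨h, h0⟩
    obtain rfl := h0 a rfl
    exact ⟨rfl, h⟩
  · rintro ⟨rfl, h⟩
    exact ⟨h, by simp⟩

theorem IsDyckList.exists_eq_zero_cons {l : List ℕ} (h : IsDyckList l) (hne : l ≠ []) :
    ∃ t, l = 0 :: t ∧ (0 :: t).IsChain IsDyckStep := by
  obtain ⟨a, t, rfl⟩ := List.exists_cons_of_ne_nil hne
  obtain ⟨rfl, ht⟩ := isDyckList_cons_iff.1 h
  exact ⟨t, rfl, ht⟩

@[simp] theorem lastSucc_nil : lastSucc [] = 0 := rfl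

@[simp] theorem lastSucc_concat (x : List ℕ) (v : ℕ) : lastSucc (x ++ [v]) = v + 1 := by
  simp [lastSucc]

theorem isDyckList_append_iff {x d : List ℕ} :
    IsDyckList (x ++ d) ↔
      IsDyckList x ∧ d.IsChain IsDyckStep ∧ ∀ a ∈ d.head?, a ≤ lastSucc x := by
  rcases List.eq_nil_or_concat' x with rfl | ⟨y, b, rfl⟩
  · simp [IsDyckList, lastSucc]
  · rw [IsDyckList, IsDyckList, List.isChain_append, List.getLast?_concat,
      List.head?_append_of_ne_nil _ (by simp), lastSucc_concat]
    simp only [Option.mem_def, Option.some.injEq, forall_eq']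
    tauto

theorem isDyckList_concat_iff {x : List ℕ} {v : ℕ} :
    IsDyckList (x ++ [v]) ↔ IsDyckList x ∧ v ≤ lastSucc x := by
  simp [isDyckList_append_iff]

theorem lastSucc_eq_succ_iff {l : List ℕ} {k : ℕ} : lastSucc l = k + 1 ↔ l.getLast? = some k := by
  cases h : l.getLast? <;> simp [lastSucc, h]

theorem lastSucc_pos {l : List ℕ} (h : l ≠ []) : 0 < lastSucc l := by
  obtain ⟨x, v, rfl⟩ := (List.eq_nil_or_concat l).resolve_left h
  simp

theorem IsDyckList.lastSucc_le_length {l : List ℕ} (h : IsDyckList l) : lastSucc l ≤ l.length := by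
  induction l using List.reverseRecOn with
  | nil => simp
  | append_singleton x v ih =>
    obtain ⟨hx, hv⟩ := isDyckList_concat_iff.1 h
    have := ih hx
    rw [lastSucc_concat, List.length_append, List.length_singleton]
    omega

theorem mem_dyckLists {n : ℕ} {l : List ℕ} : l ∈ dyckLists n ↔ IsDyckList l ∧ l.length = n := by
  induction n generalizing l with
  | zero =>
    simp only [dyckLists, Finset.mem_singleton, List.length_eq_zero_iff]
    exact ⟨fun h => ⟨h ▸ isDyckList_nil, h⟩, And.right⟩
  | succ n ih =>
    rcases List.eq_nil_or_concat l with rfl | ⟨x, v, rfl⟩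
    · simp [dyckLists]
    · simp [dyckLists, ih, isDyckList_concat_iff, and_right_comm]

section OfFn

variable {n : ℕ}

theorem isDyckSeq_iff_isDyckList_ofFn (g : Fin n → ℕ) :
    IsDyckSeq g ↔ IsDyckList (List.ofFn g) := by
  rw [IsDyckSeq, IsDyckList, List.isChain_iff_getElem]
  refine and_comm.trans (and_congr ⟨fun h i hi => ?_, fun h i j hij => ?_⟩ ?_)
  · simp only [List.length_ofFn] at hi
    simpa using h ⟨i, by omega⟩ ⟨i + 1, hi⟩ rfl
  · obtain ⟨i, hi⟩ := i
    obtain ⟨j, hj⟩ := j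
    simp only at hij
    subst hij
    have := h i (by simpa using hj)
    simp only [List.getElem_ofFn] at this
    exact this
  · cases n with
    | zero => simp
    | succ n =>
      simp only [List.ofFn_succ, List.head?_cons, Option.mem_def, Option.some.injEq,
        forall_eq']
      exact ⟨fun h => h 0 rfl, fun h i hi => by rwa [Fin.ext (a := i) (b := 0) hi]⟩

theorem area_eq_sum_ofFn (g : Fin n → ℕ) : area g = (List.ofFn g).sum :=
  List.sum_ofFn.symm

theorem List.countP_ofFn {α : Type*} (p : α → Prop) [DecidablePred p] (f : Fin n → α) :
    (List.ofFn f).countP p = #{i | p (f i)} := by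
  induction n with
  | zero => simp
  | succ n ih =>
    rw [List.ofFn_succ, List.countP_cons, ih, Fin.card_filter_univ_succ]
    by_cases h : p (f 0) <;> simp [h]

theorem dinv_succ (g : Fin (n + 1) → ℕ) :
    dinv g = #{j : Fin n | g 0 = g j.succ ∨ g 0 = g j.succ + 1} + dinv (Fin.tail g) := by
  rw [dinv, dinv, card_filter, card_filter, card_filter]
  simp only [Fintype.sum_prod_type, Fin.sum_univ_succ (n := n), Fin.tail, Fin.succ_pos,
    Fin.succ_lt_succ_iff, Fin.not_lt_zero, false_and, true_and, if_false, zero_add]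
  rfl

theorem dinv_eq_dinvList_ofFn (g : Fin n → ℕ) : dinv g = dinvList (List.ofFn g) := by
  induction n with
  | zero => simp [dinv, dinvList]
  | succ n ih => rw [dinv_succ, List.ofFn_succ, dinvList, List.countP_ofFn, ih]; rfl

theorem finsum_isDyckSeq_eq_sum_dyckLists {M : Type*} [AddCommMonoid M] (n : ℕ)
    (f : List ℕ → M) :
    ∑ᶠ g ∈ {g : Fin n → ℕ | IsDyckSeq g}, f (List.ofFn g) = ∑ l ∈ dyckLists n, f l := by
  rw [← finsum_mem_coe_finset]
  refine finsum_mem_eq_of_bijOn List.ofFn ⟨fun g hg => ?_, List.ofFn_injective.injOn,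
    fun l hl => ?_⟩ fun _ _ => rfl
  · exact mem_dyckLists.2 ⟨(isDyckSeq_iff_isDyckList_ofFn g).1 hg, List.length_ofFn⟩
  · obtain ⟨hdyck, rfl⟩ := mem_dyckLists.1 hl
    exact ⟨fun i => l[(i : ℕ)], (isDyckSeq_iff_isDyckList_ofFn _).2 (by rwa [List.ofFn_getElem]),
      List.ofFn_getElem⟩

end OfFn

def boundedMultisets (j s : ℕ) : Finset (Multiset ℕ) :=
  ((range (s + 1)).sym j).image (↑)

theorem mem_boundedMultisets {j s : ℕ} {m : Multiset ℕ} :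
    m ∈ boundedMultisets j s ↔ Multiset.card m = j ∧ ∀ a ∈ m, a ≤ s := by
  simp only [boundedMultisets, mem_image, mem_sym_iff, mem_range, Nat.lt_succ_iff]
  constructor
  · rintro ⟨m, hm, rfl⟩
    exact ⟨m.2, hm⟩
  · rintro ⟨rfl, hm⟩
    exact ⟨⟨m, rfl⟩, hm, rfl⟩

section DinvSide

def stripZeros : List ℕ → List ℕ
  | [] => []
  | 0 :: t => stripZeros t
  | (a + 1) :: t => a :: stripZeros t

/- `zeroLabels l` labels each `0` of `l` by the number of `1`s before it. `insertZeros c x` raises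
`x` by one and inserts `c j` zeros right after its `j`-th new `1` (before the first one when
`j = 0`), so that they receive label `j`. -/
def zeroLabels : List ℕ → Multiset ℕ
  | [] => 0
  | 0 :: t => 0 ::ₘ zeroLabels t
  | 1 :: t => (zeroLabels t).map (· + 1)
  | (_ + 2) :: t => zeroLabels t

def insertZeros : (ℕ → ℕ) → List ℕ → List ℕ
  | c, [] => List.replicate (c 0) 0
  | c, 0 :: t => List.replicate (c 0) 0 ++ 1 :: insertZeros (fun j => c (j + 1)) t
  | c, (a + 1) :: t => (a + 2) :: insertZeros c t

theorem dinvList_cons_zero (t : List ℕ) : dinvList (0 :: t) = t.count 0 + dinvList t := by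
  rw [dinvList, List.count_eq_countP]
  congr 1
  exact List.countP_congr fun b _ => by simp only [decide_eq_true_eq, beq_iff_eq]; omega

theorem dinvList_cons_succ (a : ℕ) (t : List ℕ) :
    dinvList ((a + 1) :: t) = t.count (a + 1) + t.count a + dinvList t := by
  rw [dinvList]
  congr 1
  induction t with
  | nil => rfl
  | cons b t ih =>
    simp only [List.countP_cons, List.count_cons, ih, beq_iff_eq, decide_eq_true_eq]
    split_ifs <;> omega

theorem count_stripZeros (t : List ℕ) (b : ℕ) : (stripZeros t).count b = t.count (b + 1) := by
  induction t using stripZeros.induct <;> simp [stripZeros, List.count_cons, *]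

theorem length_stripZeros_add_count_zero (t : List ℕ) :
    (stripZeros t).length + t.count 0 = t.length := by
  induction t using stripZeros.induct with
  | case1 => rfl
  | case2 t ih => rw [stripZeros, List.count_cons_self, List.length_cons]; omega
  | case3 a t ih =>
    rw [stripZeros, List.count_cons_of_ne (Nat.succ_ne_zero a), List.length_cons,
      List.length_cons]
    omega

theorem card_zeroLabels (t : List ℕ) : Multiset.card (zeroLabels t) = t.count 0 := by
  induction t using zeroLabels.induct <;> simp [zeroLabels, *]

theorem le_count_one_of_mem_zeroLabels {t : List ℕ} {a : ℕ} (ha : a ∈ zeroLabels t) :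
    a ≤ t.count 1 := by
  induction t using zeroLabels.induct generalizing a with
  | case1 => simp [zeroLabels] at ha
  | case2 t ih =>
    rcases Multiset.mem_cons.1 ha with rfl | ha
    · exact Nat.zero_le _
    · simpa [List.count_cons] using ih ha
  | case3 t ih =>
    obtain ⟨b, hb, rfl⟩ := Multiset.mem_map.1 ha
    simpa [List.count_cons] using ih hb
  | case4 b t ih => simpa [List.count_cons] using ih ha

theorem dinvList_eq_dinvList_stripZeros_add (l : List ℕ) :
    dinvList l = dinvList (stripZeros l) + (l.count 0).choose 2 + (zeroLabels l).sum := by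
  induction l using zeroLabels.induct with
  | case1 => rfl
  | case2 t ih =>
    rw [dinvList_cons_zero, ih, List.count_cons_self, Nat.choose_succ_succ', Nat.choose_one_right]
    simp only [stripZeros, Nat.reduceAdd, zeroLabels, Multiset.sum_cons, zero_add]
    omega
  | case3 t ih =>
    rw [dinvList_cons_succ, ih]
    simp only [stripZeros, zeroLabels, dinvList_cons_zero, count_stripZeros, zero_add,
      List.count_cons_of_ne one_ne_zero, Multiset.sum_map_add, Multiset.map_id',
      Multiset.map_const', Multiset.sum_replicate, card_zeroLabels, smul_eq_mul, mul_one]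
    omega
  | case4 a t ih =>
    rw [dinvList_cons_succ, ih]
    simp only [stripZeros, zeroLabels, dinvList_cons_succ, count_stripZeros,
      List.count_cons_of_ne (Nat.succ_ne_zero _)]
    omega

theorem stripZeros_replicate_zero_append (r : ℕ) (w : List ℕ) :
    stripZeros (List.replicate r 0 ++ w) = stripZeros w := by
  induction r with
  | zero => rfl
  | succ r ih => rw [List.replicate_succ, List.cons_append, stripZeros, ih]

theorem stripZeros_insertZeros (c : ℕ → ℕ) (x : List ℕ) : stripZeros (insertZeros c x) = x := by
  induction x generalizing c with
  | nil =>
    rw [insertZeros, ← List.append_nil (List.replicate _ _), stripZeros_replicate_zero_append]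
    rfl
  | cons a t ih =>
    cases a <;> simp [insertZeros, stripZeros_replicate_zero_append, stripZeros, ih]

theorem zeroLabels_replicate_zero_append (r : ℕ) (w : List ℕ) :
    zeroLabels (List.replicate r 0 ++ w) = Multiset.replicate r 0 + zeroLabels w := by
  induction r with
  | zero => simp
  | succ r ih => simp [List.replicate_succ, zeroLabels, ih, Multiset.replicate_succ]

theorem count_zeroLabels_insertZeros (c : ℕ → ℕ) (x : List ℕ) (j : ℕ) :
    (zeroLabels (insertZeros c x)).count j = if j ≤ x.count 0 then c j else 0 := by
  induction x generalizing c j with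
  | nil =>
    rw [insertZeros, ← List.append_nil (List.replicate _ _), zeroLabels_replicate_zero_append]
    rcases j with _ | j <;> simp [Multiset.count_replicate, zeroLabels]
  | cons a t ih =>
    rcases a with _ | a
    · rcases j with _ | j <;>
        simp [insertZeros, zeroLabels_replicate_zero_append, zeroLabels, Multiset.count_replicate,
          Multiset.count_map_eq_count' _ _ (add_left_injective 1), ih]
    · simp [insertZeros, zeroLabels, ih]

theorem zeroLabels_insertZeros {x : List ℕ} {m : Multiset ℕ} (hm : ∀ a ∈ m, a ≤ x.count 0) :
    zeroLabels (insertZeros m.count x) = m := by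
  ext j
  rw [count_zeroLabels_insertZeros]
  split_ifs with hj
  · rfl
  · exact (Multiset.count_eq_zero.2 fun h => hj (hm j h)).symm

theorem isChain_cons_replicate_zero_append {p r : ℕ} {w : List ℕ}
    (hw : (0 :: w).IsChain IsDyckStep) : (p :: (List.replicate r 0 ++ w)).IsChain IsDyckStep := by
  induction r generalizing p with
  | zero => exact hw.imp_head fun h => by omega
  | succ r ih => exact .cons_cons (by omega) ih

theorem isChain_insertZeros (c : ℕ → ℕ) {p : ℕ} {x : List ℕ}
    (hx : (p :: x).IsChain IsDyckStep) : ((p + 1) :: insertZeros c x).IsChain IsDyckStep := by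
  induction x generalizing c p with
  | nil => simpa [insertZeros] using isChain_cons_replicate_zero_append (.singleton 0)
  | cons a t ih =>
    rw [List.isChain_cons_cons] at hx
    rcases a with _ | a
    · exact isChain_cons_replicate_zero_append (.cons_cons (by omega) (ih _ hx.2))
    · exact .cons_cons (by omega) (ih c hx.2)

theorem isDyckList_cons_zero_insertZeros (c : ℕ → ℕ) {x : List ℕ} (hx : IsDyckList x) :
    IsDyckList (0 :: insertZeros c x) := by
  refine isDyckList_cons_iff.2 ⟨rfl, ?_⟩
  rcases x with _ | ⟨a, t⟩
  · simpa [insertZeros] using isChain_cons_replicate_zero_append (.singleton 0)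
  · obtain ⟨rfl, ht⟩ := isDyckList_cons_iff.1 hx
    exact isChain_cons_replicate_zero_append (.cons_cons (by omega) (isChain_insertZeros _ ht))

theorem isChain_stripZeros {p : ℕ} {t : List ℕ} (h : ((p + 1) :: t).IsChain IsDyckStep) :
    (p :: stripZeros t).IsChain IsDyckStep := by
  induction t generalizing p with
  | nil => exact .singleton p
  | cons a t ih =>
    rw [List.isChain_cons_cons] at h
    rcases a with _ | a
    · exact (ih (p := 0) (h.2.imp_head fun h => by omega)).imp_head fun h => by omega
    · exact .cons_cons (by omega) (ih h.2)

theorem isDyckList_stripZeros {t : List ℕ} (h : (0 :: t).IsChain IsDyckStep) :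
    IsDyckList (stripZeros t) := by
  induction t with
  | nil => exact isDyckList_nil
  | cons a t ih =>
    rw [List.isChain_cons_cons] at h
    rcases a with _ | _ | a
    · exact ih h.2
    · exact isDyckList_cons_iff.2 ⟨rfl, isChain_stripZeros h.2⟩
    · omega

theorem insertZeros_count_cons_zero (L : Multiset ℕ) {y : List ℕ}
    (hy : ∀ a ∈ y.head?, a = 0) : insertZeros (0 ::ₘ L).count y = 0 :: insertZeros L.count y := by
  rcases y with _ | ⟨_ | a, t⟩
  · simp [insertZeros, List.replicate_succ]
  · simp [insertZeros, List.replicate_succ]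
  · simp at hy

theorem insertZeros_stripZeros {p : ℕ} {t : List ℕ} (h : (p :: t).IsChain IsDyckStep) :
    insertZeros (zeroLabels t).count (stripZeros t) = t := by
  induction t generalizing p with
  | nil => simp [insertZeros, stripZeros, zeroLabels]
  | cons a t ih =>
    rw [List.isChain_cons_cons] at h
    rcases a with _ | _ | a
    · rw [zeroLabels, stripZeros, insertZeros_count_cons_zero _ (isDyckList_stripZeros h.2).2,
        ih h.2]
    · simp [zeroLabels, stripZeros, insertZeros,
        Multiset.count_map_eq_count' _ _ (add_left_injective 1), ih h.2]
    · simp [zeroLabels, stripZeros, insertZeros, ih h.2]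

theorem sum_dyckLists_count_zero_eq {M : Type*} [AddCommMonoid M] (F : ℕ → ℕ → M) {n k : ℕ}
    (hk : k ∈ Icc 1 n) :
    ∑ l ∈ dyckLists n with l.count 0 = k, F (dinvList l) (l.count 0) =
      ∑ p ∈ (dyckLists (n - k)).sigma fun x => boundedMultisets (k - 1) (x.count 0),
        F (dinvList p.1 + k.choose 2 + p.2.sum) k := by
  rw [mem_Icc] at hk
  have hzero : ∀ l ∈ {l ∈ dyckLists n | l.count 0 = k}, ∃ t, l = 0 :: t ∧
      (0 :: t).IsChain IsDyckStep ∧ t.length + 1 = n ∧ t.count 0 + 1 = k := by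
    intro l hl
    obtain ⟨hmem, rfl⟩ := mem_filter.1 hl
    obtain ⟨hdyck, rfl⟩ := mem_dyckLists.1 hmem
    obtain ⟨t, rfl, ht⟩ := hdyck.exists_eq_zero_cons (by rintro rfl; simp at hk)
    exact ⟨t, rfl, ht, rfl, List.count_cons_self.symm⟩
  refine sum_nbij' (fun l => ⟨stripZeros l, zeroLabels l.tail⟩)
    (fun p => 0 :: insertZeros p.2.count p.1) ?_ ?_ ?_ ?_ ?_
  · intro l hl
    obtain ⟨t, rfl, ht, hlen, hcount⟩ := hzero l hl
    have := length_stripZeros_add_count_zero t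
    simp only [mem_sigma, mem_dyckLists, mem_boundedMultisets, stripZeros, List.tail_cons,
      count_stripZeros, card_zeroLabels]
    exact ⟨⟨isDyckList_stripZeros ht, by omega⟩, by omega,
      fun a ha => le_count_one_of_mem_zeroLabels ha⟩
  · rintro ⟨x, m⟩ hp
    simp only [mem_sigma, mem_dyckLists, mem_boundedMultisets] at hp
    obtain ⟨⟨hx, hxlen⟩, hcard, hm⟩ := hp
    have hcount : (insertZeros m.count x).count 0 = k - 1 := by
      rw [← card_zeroLabels, zeroLabels_insertZeros hm, hcard]
    have hlen := length_stripZeros_add_count_zero (insertZeros m.count x)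
    rw [stripZeros_insertZeros] at hlen
    simp only [mem_filter, mem_dyckLists, List.length_cons, List.count_cons_self]
    exact ⟨⟨isDyckList_cons_zero_insertZeros _ hx, by omega⟩, by omega⟩
  · intro l hl
    obtain ⟨t, rfl, ht, -, -⟩ := hzero l hl
    simp [stripZeros, insertZeros_stripZeros ht]
  · rintro ⟨x, m⟩ hp
    simp only [mem_sigma, mem_boundedMultisets] at hp
    simp [stripZeros, stripZeros_insertZeros, zeroLabels_insertZeros hp.2.2]
  · intro l hl
    obtain ⟨t, rfl, -, -, hcount⟩ := hzero l hl
    rw [dinvList_eq_dinvList_stripZeros_add, List.count_cons_self, hcount]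
    simp [stripZeros, zeroLabels]

end DinvSide

section AreaSide

-- `staircase i [t₀, …, t_{m-1}] = [t₀ + i, t₁ + (i + 1), …, t_{m-1} + (i + m - 1), i + m]`
def staircase : ℕ → List ℕ → List ℕ
  | i, [] => [i]
  | i, a :: r => (a + i) :: staircase (i + 1) r

def unstaircase : ℕ → List ℕ → List ℕ
  | _, [] => []
  | _, [_] => []
  | i, a :: b :: r => (a - i) :: unstaircase (i + 1) (b :: r)

theorem length_staircase (i : ℕ) (t : List ℕ) : (staircase i t).length = t.length + 1 := by
  induction t generalizing i <;> simp [staircase, *]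

theorem head?_staircase (i : ℕ) (t : List ℕ) : (staircase i t).head? = some (t.headD 0 + i) := by
  cases t <;> simp [staircase]

theorem getLast?_staircase (i : ℕ) (t : List ℕ) :
    (staircase i t).getLast? = some (i + t.length) := by
  induction t generalizing i with
  | nil => simp [staircase]
  | cons a r ih =>
    rw [staircase, List.getLast?_cons, ih, Option.getD_some, List.length_cons, ← add_assoc,
      add_right_comm]

theorem sum_staircase (i : ℕ) (t : List ℕ) :
    (staircase i t).sum = t.sum + (t.length + 1) * i + (t.length + 1).choose 2 := by
  induction t generalizing i with
  | nil => simp [staircase]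
  | cons a r ih =>
    rw [staircase, List.sum_cons, ih, List.sum_cons, List.length_cons,
      Nat.choose_succ_succ' (r.length + 1), Nat.choose_one_right]
    ring

theorem isChain_staircase_iff (i : ℕ) (t : List ℕ) :
    (staircase i t).IsChain IsDyckStep ↔ t.IsChain (· ≥ ·) := by
  induction t generalizing i with
  | nil => simp [staircase]
  | cons a r ih =>
    cases r with
    | nil => simp [staircase]
    | cons b r =>
      rw [staircase, staircase, List.isChain_cons_cons, ← staircase, ih, List.isChain_cons_cons]
      exact and_congr_left' (by omega)

theorem unstaircase_staircase (i : ℕ) (t : List ℕ) : unstaircase i (staircase i t) = t := by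
  induction t generalizing i with
  | nil => simp [staircase, unstaircase]
  | cons a r ih =>
    obtain ⟨b, w, hbw⟩ := List.exists_cons_of_length_eq_add_one (length_staircase (i + 1) r)
    rw [staircase, hbw, unstaircase, ← hbw, ih]
    simp

theorem staircase_unstaircase {i : ℕ} {d : List ℕ} (hd : d.IsChain IsDyckStep)
    (hlast : d.getLast? = some (i + d.length - 1)) : staircase i (unstaircase i d) = d := by
  induction d generalizing i with
  | nil => simp at hlast
  | cons a r ih =>
    cases r with
    | nil => simp_all [staircase, unstaircase]
    | cons b r =>
      rw [List.isChain_cons_cons] at hd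
      have ih' := ih (i := i + 1) hd.2 (by
        rw [← List.getLast?_cons_cons (a := a), hlast, List.length_cons, List.length_cons]
        congr 1
        omega)
      have hb : i + 1 ≤ b := by
        have := congr_arg List.head? ih'
        simp only [head?_staircase, List.head?_cons, Option.some.injEq] at this
        omega
      rw [unstaircase, staircase, ih']
      congr 1
      omega

theorem isDyckList_append_staircase_iff {x t : List ℕ} :
    IsDyckList (x ++ staircase 0 t) ↔
      IsDyckList x ∧ t.Pairwise (· ≥ ·) ∧ ∀ a ∈ t, a ≤ lastSucc x := by
  rw [isDyckList_append_iff, isChain_staircase_iff, List.isChain_iff_pairwise, head?_staircase]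
  refine and_congr_right' (and_congr_right fun ht => ?_)
  cases t with
  | nil => simp
  | cons b r =>
    rw [List.pairwise_cons] at ht
    simp only [List.headD_cons, add_zero, Option.mem_def, Option.some.injEq, forall_eq',
      List.mem_cons, forall_eq_or_imp]
    exact ⟨fun hb => ⟨hb, fun a ha => (ht.1 a ha).trans hb⟩, And.left⟩

theorem lastSucc_append_staircase (x : List ℕ) (i : ℕ) (t : List ℕ) :
    lastSucc (x ++ staircase i t) = i + t.length + 1 := by
  rw [lastSucc_eq_succ_iff, List.getLast?_append, getLast?_staircase]
  rfl

theorem IsDyckList.exists_eq_append_staircase {l : List ℕ} (h : IsDyckList l) (hne : l ≠ []) :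
    ∃ x t, l = x ++ staircase 0 t ∧ t.length + 1 = lastSucc l := by
  have hpos := lastSucc_pos hne
  have hle := h.lastSucc_le_length
  set d := l.drop (l.length - lastSucc l)
  have hlen : d.length = lastSucc l := by rw [List.length_drop]; omega
  have hd : staircase 0 (unstaircase 0 d) = d := by
    refine staircase_unstaircase (h.1.drop _) ?_
    rw [List.getLast?_drop, if_neg (by omega), ← lastSucc_eq_succ_iff, hlen]
    omega
  exact ⟨l.take _, unstaircase 0 d, by rw [hd, List.take_append_drop],
    by rw [← length_staircase 0, hd, hlen]⟩

theorem sum_dyckLists_lastSucc_eq {M : Type*} [AddCommMonoid M] (F : ℕ → ℕ → M) {n k : ℕ}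
    (hk : k ∈ Icc 1 n) :
    ∑ l ∈ dyckLists n with lastSucc l = k, F l.sum (lastSucc l) =
      ∑ p ∈ (dyckLists (n - k)).sigma fun x => boundedMultisets (k - 1) (lastSucc x),
        F (p.1.sum + k.choose 2 + p.2.sum) k := by
  rw [mem_Icc] at hk
  have hsplit : ∀ l ∈ {l ∈ dyckLists n | lastSucc l = k}, ∃ x t, l = x ++ staircase 0 t ∧
      IsDyckList x ∧ t.Pairwise (· ≥ ·) ∧ (∀ a ∈ t, a ≤ lastSucc x) ∧
      x.length = n - k ∧ t.length + 1 = k := by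
    intro l hl
    obtain ⟨hmem, rfl⟩ := mem_filter.1 hl
    obtain ⟨hdyck, rfl⟩ := mem_dyckLists.1 hmem
    obtain ⟨x, t, rfl, ht⟩ := hdyck.exists_eq_append_staircase (by rintro rfl; simp at hk)
    obtain ⟨hx, hsorted, hbound⟩ := isDyckList_append_staircase_iff.1 hdyck
    refine ⟨x, t, rfl, hx, hsorted, hbound, ?_, ht⟩
    rw [List.length_append, length_staircase]
    omega
  refine sum_nbij' (fun l => ⟨l.take (n - k), ↑(unstaircase 0 (l.drop (n - k)))⟩)
    (fun p => p.1 ++ staircase 0 (p.2.sort (· ≥ ·))) ?_ ?_ ?_ ?_ ?_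
  · intro l hl
    obtain ⟨x, t, rfl, hx, -, ht, hxlen, htlen⟩ := hsplit l hl
    simp only [mem_sigma, mem_dyckLists, mem_boundedMultisets, ← hxlen, List.take_left,
      List.drop_left, unstaircase_staircase, Multiset.coe_card, Multiset.mem_coe]
    exact ⟨⟨hx, trivial⟩, by omega, ht⟩
  · rintro ⟨x, m⟩ hp
    simp only [mem_sigma, mem_dyckLists, mem_boundedMultisets] at hp
    obtain ⟨⟨hx, hxlen⟩, hcard, hm⟩ := hp
    simp only [mem_filter, mem_dyckLists, isDyckList_append_staircase_iff, List.length_append,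
      length_staircase, Multiset.length_sort, lastSucc_append_staircase]
    exact ⟨⟨⟨hx, Multiset.pairwise_sort _ _, fun a ha => hm a ((Multiset.mem_sort _).1 ha)⟩,
      by omega⟩, by omega⟩
  · intro l hl
    obtain ⟨x, t, rfl, -, ht, -, hxlen, -⟩ := hsplit l hl
    simp only [← hxlen, List.take_left, List.drop_left, unstaircase_staircase, Multiset.coe_sort,
      List.mergeSort_eq_self _ ht]
  · rintro ⟨x, m⟩ hp
    simp only [mem_sigma, mem_dyckLists] at hp
    simp only [← hp.1.2, List.take_left, List.drop_left, unstaircase_staircase, Multiset.sort_eq]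
  · intro l hl
    obtain ⟨x, t, rfl, -, -, -, hxlen, htlen⟩ := hsplit l hl
    simp only [← hxlen, List.take_left, List.drop_left, unstaircase_staircase, List.sum_append,
      sum_staircase, htlen, Multiset.sum_coe, lastSucc_append_staircase]
    congr 1
    · ring
    · omega

end AreaSide

-- Quantifying over all weights `F` makes the inner sums over labels an instance of the
-- induction hypothesis.
theorem sum_dyckLists_dinvList_count_zero_eq_sum_lastSucc {M : Type*} [AddCommMonoid M] (n : ℕ)
    (F : ℕ → ℕ → M) :
    ∑ l ∈ dyckLists n, F (dinvList l) (l.count 0) = ∑ l ∈ dyckLists n, F l.sum (lastSucc l) := by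
  induction n using Nat.strong_induction_on generalizing F with
  | _ n ih =>
  rcases Nat.eq_zero_or_pos n with rfl | hn
  · simp [dyckLists, dinvList, lastSucc]
  rw [← sum_fiberwise_of_maps_to (g := fun l => l.count 0) (t := Icc 1 n) ?zeros,
    ← sum_fiberwise_of_maps_to (g := lastSucc) (t := Icc 1 n) ?last]
  · refine sum_congr rfl fun k hk => ?_
    rw [sum_dyckLists_count_zero_eq F hk, sum_dyckLists_lastSucc_eq F hk, sum_sigma, sum_sigma]
    exact ih (n - k) (by rw [mem_Icc] at hk; omega)
      fun d s => ∑ m ∈ boundedMultisets (k - 1) s, F (d + k.choose 2 + m.sum) k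
  all_goals
    intro l hl
    obtain ⟨hdyck, rfl⟩ := mem_dyckLists.1 hl
    rw [mem_Icc]
  case zeros =>
    obtain ⟨t, rfl, -⟩ := hdyck.exists_eq_zero_cons (List.ne_nil_of_length_pos hn)
    simpa using List.count_le_length (a := 0) (l := t)
  case last => exact ⟨lastSucc_pos (List.ne_nil_of_length_pos hn), hdyck.lastSucc_le_length⟩

/-- The statistics `area` and `dinv` are equidistributed on Dyck sequences of
length `n`. -/
theorem area_dinv_equidistributed (n : ℕ) :
    ∑ᶠ g ∈ {g : Fin n → ℕ | IsDyckSeq g}, (Polynomial.X : Polynomial ℤ) ^ area g =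
      ∑ᶠ g ∈ {g : Fin n → ℕ | IsDyckSeq g}, (Polynomial.X : Polynomial ℤ) ^ dinv g := by
  simp only [area_eq_sum_ofFn, dinv_eq_dinvList_ofFn]
  rw [finsum_isDyckSeq_eq_sum_dyckLists n fun l => Polynomial.X ^ l.sum,
    finsum_isDyckSeq_eq_sum_dyckLists n fun l => Polynomial.X ^ dinvList l]
  exact (sum_dyckLists_dinvList_count_zero_eq_sum_lastSucc n fun d _ => Polynomial.X ^ d).symm
end
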